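/- arXiv:2404.16108 — 4 statements merged into one kernel-verified Lean document; each statement's English description precedes it below -/
import Mathlib

section
/- Let z ∈ ℤ₊^p be fixed, let M = (M_1,…,M_p) be a square-integrable ℤ^p-valued random vector with M_i ≥ −z_i almost surely, and let {X_{j,i} : j ∈ ℕ, i ∈ {1,…,p}} be square-integrable ℤ₊^p-valued random vectors, identically distributed in j for each fixed i, with the whole family {X_{j,i}} independent and independent of M. Set m_i = E[X_{1,i}], m the p×p matrix with columns m_1,…,m_p, Σ_i = Cov(X_{1,i}) (the p×p covariance matrix), and S = Σ_{i=1}^p Σ_{j=1}^{z_i+M_i} X_{j,i}. Then the covariance matrix of S satisfies Cov(S) = Σ_{i=1}^p (z_i + E[M_i]) Σ_i + m Cov(M) m^T, entrywise: Cov(S)_{a,b} = Σ_{i=1}^p (z_i+E[M_i]) (Σ_i)_{a,b} + (m Cov(M) m^T)_{a,b}. (This is the one-step version of equation (4) of Proposition 1.) -/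
/-!
Write `K = z + M` for the vector of population sizes by type, so that `S = T_K`, where
`T_u a = ∑ᵢ ∑_{j < uᵢ} X_{j,i,a}` is the sum of a deterministic number `u` of offspring vectors.
Since `K` is a function of `M`, it is independent of the whole offspring array, so conditioning on
`K = u` just evaluates the moments of `T_u`. Distinct offspring vectors are independent, hence
`E[T_u] = u m` and `Cov(T_u) = ∑ᵢ uᵢ Σᵢ`. The law of total covariance then gives
`Cov(S) = E[∑ᵢ Kᵢ Σᵢ] + Cov(K m) = ∑ᵢ E[Kᵢ] Σᵢ + m Cov(K) mᵀ`, and `Cov(K) = Cov(M)` because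
`K - M = z` is deterministic.
-/

open MeasureTheory ProbabilityTheory Function

namespace ProbabilityTheory

lemma iIndepFun.indepFun_none_some {Ω α β : Type*} {mΩ : MeasurableSpace Ω} {μ : Measure Ω}
    [MeasurableSpace β] {f : Option α → Ω → β} (hf : iIndepFun f μ)
    (hmeas : ∀ o, Measurable (f o)) :
    IndepFun (f none) (fun ω a ↦ f (some a) ω) μ := by
  rw [IndepFun_iff_Indep]
  have h := indep_iSup_of_disjoint (fun o ↦ (hmeas o).comap_le)
    ((iIndepFun_iff_iIndep _ f μ).mp hf) (S := {none}) (T := Set.range some) (by simp)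
  refine indep_of_indep_of_le_right (indep_of_indep_of_le_left h ?_) ?_
  · exact le_biSup (fun o ↦ MeasurableSpace.comap (f o) _) rfl
  · simp only [MeasurableSpace.pi, MeasurableSpace.comap_iSup, MeasurableSpace.comap_comp]
    exact iSup_le fun a ↦ le_biSup (fun o ↦ MeasurableSpace.comap (f o) _) ⟨a, rfl⟩

lemma iIndepFun.indepFun_offspringArray {Ω ι κ : Type*} {mΩ : MeasurableSpace Ω}
    {μ : Measure Ω} {X : ℕ → ι → Ω → κ → ℕ} {M : Ω → κ → ℤ} (hM : Measurable M)
    (hX : ∀ j i, Measurable (X j i))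
    (h : iIndepFun (fun o : Option (ℕ × ι) ↦ o.elim M fun q ω a ↦ (X q.1 q.2 ω a : ℤ)) μ) :
    IndepFun M (fun ω j i ↦ X j i ω) μ :=
  (h.indepFun_none_some (by rintro (_ | ⟨j, i⟩) <;> simp only [Option.elim] <;> fun_prop)).comp
    (φ := id) (ψ := fun (y : ℕ × ι → κ → ℤ) j i a ↦ (y (j, i) a).toNat) measurable_id (by fun_prop)

lemma iIndepFun.indepFun_offspring_coord {Ω ι κ : Type*} {mΩ : MeasurableSpace Ω}
    {μ : Measure Ω} {X : ℕ → ι → Ω → κ → ℕ} {M : Ω → κ → ℤ}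
    (h : iIndepFun (fun o : Option (ℕ × ι) ↦ o.elim M fun q ω a ↦ (X q.1 q.2 ω a : ℤ)) μ)
    {j j' : ℕ} {i i' : ι} (hne : (j, i) ≠ (j', i')) (a b : κ) :
    IndepFun (fun ω ↦ (X j i ω a : ℝ)) (fun ω ↦ (X j' i' ω b : ℝ)) μ := by
  simpa [Function.comp_def] using (h.indepFun (i := some (j, i)) (j := some (j', i'))
    (by simpa using hne)).comp (φ := fun v ↦ ((v a : ℤ) : ℝ)) (ψ := fun v ↦ ((v b : ℤ) : ℝ))
    (by fun_prop) (by fun_prop)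

lemma IdentDistrib.covariance_eq {α β : Type*} [MeasurableSpace α] [MeasurableSpace β]
    {μ : Measure α} {ν : Measure β} {X Y : α → ℝ} {X' Y' : β → ℝ}
    (h : IdentDistrib (fun ω ↦ (X ω, Y ω)) (fun ω ↦ (X' ω, Y' ω)) μ ν) :
    cov[X, Y; μ] = cov[X', Y'; ν] := by
  have hX : μ[X] = ν[X'] := (h.comp measurable_fst).integral_eq
  have hY : μ[Y] = ν[Y'] := (h.comp measurable_snd).integral_eq
  rw [covariance, covariance, hX, hY]
  exact (h.comp (u := fun q : ℝ × ℝ ↦ (q.1 - ν[X']) * (q.2 - ν[Y'])) (by fun_prop)).integral_eq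

lemma covariance_fun_sum_fun_sum_of_indepFun {Ω ι : Type*} {mΩ : MeasurableSpace Ω}
    {μ : Measure Ω} [IsFiniteMeasure μ] {s : Finset ι} {X Y : ι → Ω → ℝ}
    (hX : ∀ i ∈ s, MemLp (X i) 2 μ) (hY : ∀ i ∈ s, MemLp (Y i) 2 μ)
    (hXY : ∀ i ∈ s, ∀ j ∈ s, i ≠ j → IndepFun (X i) (Y j) μ) :
    cov[fun ω ↦ ∑ i ∈ s, X i ω, fun ω ↦ ∑ i ∈ s, Y i ω; μ] = ∑ i ∈ s, cov[X i, Y i; μ] := by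
  rw [covariance_fun_sum_fun_sum' hX hY]
  refine Finset.sum_congr rfl fun i hi ↦ Finset.sum_eq_single_of_mem i hi fun j hj hji ↦ ?_
  exact (hXY i hi j hj hji.symm).covariance_eq_zero (hX i hi) (hY j hj)

lemma covariance_fun_sum_mul_fun_sum_mul {Ω ι : Type*} [Fintype ι] {mΩ : MeasurableSpace Ω}
    {μ : Measure Ω} [IsFiniteMeasure μ] {W : ι → Ω → ℝ} (hW : ∀ i, MemLp (W i) 2 μ)
    (c d : ι → ℝ) :
    cov[fun ω ↦ ∑ i, W i ω * c i, fun ω ↦ ∑ j, W j ω * d j; μ] =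
      ∑ i, ∑ j, c i * cov[W i, W j; μ] * d j := by
  rw [covariance_fun_sum_fun_sum (fun i ↦ (hW i).mul_const (c i))
    (fun j ↦ (hW j).mul_const (d j))]
  simp only [covariance_mul_const_left, covariance_mul_const_right]
  exact Finset.sum_congr rfl fun i _ ↦ Finset.sum_congr rfl fun j _ ↦ by ring

section RandomIndex

variable {Ω ι β : Type*} {mΩ : MeasurableSpace Ω} {μ : Measure Ω}
  [MeasurableSpace ι] [MeasurableSpace β] {K : Ω → ι} {Y : Ω → β} {Φ : ι → β → ℝ}

lemma IndepFun.integrable_comp_of_nonneg [IsFiniteMeasure μ] (hKY : IndepFun K Y μ)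
    (hK : AEMeasurable K μ) (hY : AEMeasurable Y μ) (hΦ : Measurable (uncurry Φ))
    (hΦ_nonneg : ∀ u y, 0 ≤ Φ u y)
    (hΦY : ∀ u, Integrable (fun ω ↦ Φ u (Y ω)) μ)
    (hint : Integrable (fun ω ↦ ∫ ω', Φ (K ω) (Y ω') ∂μ) μ) :
    Integrable (fun ω ↦ Φ (K ω) (Y ω)) μ := by
  have hΦu : ∀ u, Measurable (Φ u) := fun u ↦ hΦ.comp measurable_prodMk_left
  have hmean : ∀ u, ∫ y, Φ u y ∂μ.map Y = ∫ ω', Φ u (Y ω') ∂μ := fun u ↦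
    integral_map hY (hΦu u).aestronglyMeasurable
  have hprod : Integrable (uncurry Φ) ((μ.map K).prod (μ.map Y)) := by
    refine (integrable_prod_iff hΦ.aestronglyMeasurable).mpr
      ⟨ae_of_all _ fun u ↦ (integrable_map_measure (hΦu u).aestronglyMeasurable hY).mpr (hΦY u),
        ?_⟩
    simp only [uncurry_apply_pair, Real.norm_of_nonneg (hΦ_nonneg _ _), hmean]
    refine (integrable_map_measure ?_ hK).mpr hint
    simpa only [← hmean] using
      (hΦ.stronglyMeasurable.integral_prod_right (ν := μ.map Y)).aestronglyMeasurable
  rw [← (indepFun_iff_map_prod_eq_prod_map_map hK hY).mp hKY] at hprod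
  exact hprod.comp_aemeasurable (hK.prodMk hY)

lemma IndepFun.integral_comp_eq_integral_integral [IsFiniteMeasure μ] (hKY : IndepFun K Y μ)
    (hK : AEMeasurable K μ) (hY : AEMeasurable Y μ) (hΦ : Measurable (uncurry Φ))
    (hint : Integrable (fun ω ↦ Φ (K ω) (Y ω)) μ) :
    ∫ ω, Φ (K ω) (Y ω) ∂μ = ∫ ω, ∫ ω', Φ (K ω) (Y ω') ∂μ ∂μ := by
  have hmap := (indepFun_iff_map_prod_eq_prod_map_map hK hY).mp hKY
  have hΦu : ∀ u, Measurable (Φ u) := fun u ↦ hΦ.comp measurable_prodMk_left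
  have hprod : Integrable (uncurry Φ) ((μ.map K).prod (μ.map Y)) := by
    rw [← hmap]
    exact (integrable_map_measure hΦ.aestronglyMeasurable (hK.prodMk hY)).mpr hint
  calc ∫ ω, Φ (K ω) (Y ω) ∂μ = ∫ x, uncurry Φ x ∂(μ.map K).prod (μ.map Y) := by
        rw [← hmap, integral_map (hK.prodMk hY) hΦ.aestronglyMeasurable]; rfl
    _ = ∫ u, ∫ y, Φ u y ∂μ.map Y ∂μ.map K := integral_prod _ hprod
    _ = ∫ ω, ∫ ω', Φ (K ω) (Y ω') ∂μ ∂μ := by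
        rw [integral_map hK
          (hΦ.stronglyMeasurable.integral_prod_right (ν := μ.map Y)).aestronglyMeasurable]
        simp only [integral_map hY (hΦu _).aestronglyMeasurable]

lemma IndepFun.covariance_comp_eq_integral_add_covariance [IsProbabilityMeasure μ] {κ : Type*}
    (hKY : IndepFun K Y μ) (hK : AEMeasurable K μ) (hY : AEMeasurable Y μ)
    {Φ : κ → ι → β → ℝ} (hΦ : ∀ a, Measurable (uncurry (Φ a)))
    (hΦ_nonneg : ∀ a u y, 0 ≤ Φ a u y) (hΦY : ∀ a u, MemLp (fun ω ↦ Φ a u (Y ω)) 2 μ)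
    {L : κ → ι → ℝ} (hL : ∀ a u, ∫ ω, Φ a u (Y ω) ∂μ = L a u)
    (hLK : ∀ a, MemLp (fun ω ↦ L a (K ω)) 2 μ) {C : κ → κ → ι → ℝ}
    (hC : ∀ a b u, cov[fun ω ↦ Φ a u (Y ω), fun ω ↦ Φ b u (Y ω); μ] = C a b u)
    (hCK : ∀ a b, Integrable (fun ω ↦ C a b (K ω)) μ) (a b : κ) :
    cov[fun ω ↦ Φ a (K ω) (Y ω), fun ω ↦ Φ b (K ω) (Y ω); μ] =
      ∫ ω, C a b (K ω) ∂μ + cov[fun ω ↦ L a (K ω), fun ω ↦ L b (K ω); μ] := by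
  have hmoment : ∀ a b u,
      ∫ ω, Φ a u (Y ω) * Φ b u (Y ω) ∂μ = C a b u + L a u * L b u := fun a b u ↦ by
    rw [← hC, covariance_eq_sub (hΦY a u) (hΦY b u), hL, hL]
    simp
  have hLL : ∀ a b, Integrable (fun ω ↦ L a (K ω) * L b (K ω)) μ :=
    fun a b ↦ (hLK a).integrable_mul (hLK b)
  have hΦΦ : ∀ a b, Measurable (uncurry fun u y ↦ Φ a u y * Φ b u y) :=
    fun a b ↦ (hΦ a).mul (hΦ b)
  have hint : ∀ a, Integrable (fun ω ↦ Φ a (K ω) (Y ω)) μ := fun a ↦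
    hKY.integrable_comp_of_nonneg hK hY (hΦ a) (hΦ_nonneg a)
      (fun u ↦ (hΦY a u).integrable one_le_two)
      (by simpa only [hL] using (hLK a).integrable one_le_two)
  have hint_mul : ∀ a b, Integrable (fun ω ↦ Φ a (K ω) (Y ω) * Φ b (K ω) (Y ω)) μ :=
    fun a b ↦ hKY.integrable_comp_of_nonneg hK hY (hΦΦ a b)
      (fun u y ↦ mul_nonneg (hΦ_nonneg a u y) (hΦ_nonneg b u y))
      (fun u ↦ (hΦY a u).integrable_mul (hΦY b u))
      (by simpa only [hmoment] using (hCK a b).fun_add (hLL a b))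
  have hmemLp : ∀ a, MemLp (fun ω ↦ Φ a (K ω) (Y ω)) 2 μ := fun a ↦
    (memLp_two_iff_integrable_sq (f := fun ω ↦ Φ a (K ω) (Y ω))
      ((hΦ a).comp_aemeasurable (hK.prodMk hY)).aestronglyMeasurable).mpr
      (by simpa only [sq] using hint_mul a a)
  rw [covariance_eq_sub (hmemLp a) (hmemLp b), covariance_eq_sub (hLK a) (hLK b)]
  simp only [Pi.mul_apply]
  rw [hKY.integral_comp_eq_integral_integral hK hY (hΦΦ a b) (hint_mul a b),
    hKY.integral_comp_eq_integral_integral hK hY (hΦ a) (hint a),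
    hKY.integral_comp_eq_integral_integral hK hY (hΦ b) (hint b)]
  simp only [hmoment, hL]
  rw [integral_add (hCK a b) (hLL a b)]
  ring

end RandomIndex

section Offspring

variable {Ω ι κ : Type*} [Fintype ι] {mΩ : MeasurableSpace Ω} {μ : Measure Ω}
  {X : ℕ → ι → Ω → κ → ℕ}

def offspringSum (u : ι → ℕ) (y : ℕ → ι → κ → ℕ) (a : κ) : ℝ :=
  ∑ i, ∑ j ∈ Finset.range (u i), (y j i a : ℝ)

lemma offspringSum_eq_sum_sigma (u : ι → ℕ) (y : ℕ → ι → κ → ℕ) (a : κ) :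
    offspringSum u y a = ∑ q ∈ Finset.univ.sigma fun i ↦ Finset.range (u i), (y q.2 q.1 a : ℝ) := by
  rw [offspringSum, Finset.sum_sigma]

lemma offspringSum_nonneg (u : ι → ℕ) (y : ℕ → ι → κ → ℕ) (a : κ) : 0 ≤ offspringSum u y a := by
  unfold offspringSum
  positivity

lemma memLp_offspringSum (hX : ∀ j i a, MemLp (fun ω ↦ (X j i ω a : ℝ)) 2 μ) (u : ι → ℕ)
    (a : κ) : MemLp (fun ω ↦ offspringSum u (fun j i ↦ X j i ω) a) 2 μ :=
  memLp_finsetSum _ fun i _ ↦ memLp_finsetSum _ fun j _ ↦ hX j i a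

lemma measurable_uncurry_offspringSum (a : κ) :
    Measurable (uncurry fun (u : ι → ℕ) (y : ℕ → ι → κ → ℕ) ↦ offspringSum u y a) :=
  measurable_from_prod_countable_right fun u ↦ by
    simp only [uncurry_apply_pair, offspringSum]
    exact Finset.measurable_fun_sum _ fun i _ ↦ Finset.measurable_fun_sum _ fun j _ ↦ by fun_prop

lemma integral_offspringSum (hX : ∀ j i a, Integrable (fun ω ↦ (X j i ω a : ℝ)) μ)
    {m : ι → κ → ℝ} (hm : ∀ j i a, ∫ ω, (X j i ω a : ℝ) ∂μ = m i a) (u : ι → ℕ) (a : κ) :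
    ∫ ω, offspringSum u (fun j i ↦ X j i ω) a ∂μ = ∑ i, u i * m i a := by
  simp only [offspringSum]
  rw [integral_finsetSum _ fun i _ ↦ integrable_finsetSum _ fun j _ ↦ hX j i a]
  simp [integral_finsetSum _ fun j _ ↦ hX j _ a, hm]

lemma covariance_offspringSum [IsFiniteMeasure μ]
    (hX : ∀ j i a, MemLp (fun ω ↦ (X j i ω a : ℝ)) 2 μ)
    (hindep : ∀ j i j' i', (j, i) ≠ (j', i') → ∀ a b,
      IndepFun (fun ω ↦ (X j i ω a : ℝ)) (fun ω ↦ (X j' i' ω b : ℝ)) μ)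
    {V : ι → κ → κ → ℝ}
    (hcov : ∀ j i a b, cov[fun ω ↦ (X j i ω a : ℝ), fun ω ↦ (X j i ω b : ℝ); μ] = V i a b)
    (u : ι → ℕ) (a b : κ) :
    cov[fun ω ↦ offspringSum u (fun j i ↦ X j i ω) a,
      fun ω ↦ offspringSum u (fun j i ↦ X j i ω) b; μ] = ∑ i, u i * V i a b := by
  simp only [offspringSum_eq_sum_sigma]
  rw [covariance_fun_sum_fun_sum_of_indepFun (fun q _ ↦ hX _ _ _) (fun q _ ↦ hX _ _ _)]
  · simp [Finset.sum_sigma, hcov]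
  · rintro ⟨i, j⟩ - ⟨i', j'⟩ - hne
    exact hindep j i j' i' (by aesop) a b

lemma covariance_offspringSum_comp [IsProbabilityMeasure μ]
    (hXmeas : ∀ j i, Measurable (X j i)) (hX : ∀ j i a, MemLp (fun ω ↦ (X j i ω a : ℝ)) 2 μ)
    (hindep : ∀ j i j' i', (j, i) ≠ (j', i') → ∀ a b,
      IndepFun (fun ω ↦ (X j i ω a : ℝ)) (fun ω ↦ (X j' i' ω b : ℝ)) μ)
    {m : ι → κ → ℝ} (hm : ∀ j i a, ∫ ω, (X j i ω a : ℝ) ∂μ = m i a) {V : ι → κ → κ → ℝ}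
    (hV : ∀ j i a b, cov[fun ω ↦ (X j i ω a : ℝ), fun ω ↦ (X j i ω b : ℝ); μ] = V i a b)
    {K : Ω → ι → ℕ} (hK : Measurable K) (hKmem : ∀ i, MemLp (fun ω ↦ (K ω i : ℝ)) 2 μ)
    (hKX : IndepFun K (fun ω j i ↦ X j i ω) μ) (a b : κ) :
    cov[fun ω ↦ offspringSum (K ω) (fun j i ↦ X j i ω) a,
      fun ω ↦ offspringSum (K ω) (fun j i ↦ X j i ω) b; μ] =
      ∑ i, (∫ ω, (K ω i : ℝ) ∂μ) * V i a b +
        ∑ i, ∑ i', m i a * cov[fun ω ↦ (K ω i : ℝ), fun ω ↦ (K ω i' : ℝ); μ] * m i' b := by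
  have hKint : ∀ i, Integrable (fun ω ↦ (K ω i : ℝ)) μ := fun i ↦ (hKmem i).integrable one_le_two
  rw [hKX.covariance_comp_eq_integral_add_covariance (Φ := fun a u y ↦ offspringSum u y a)
    (L := fun a u ↦ ∑ i, (u i : ℝ) * m i a) (C := fun a b u ↦ ∑ i, (u i : ℝ) * V i a b)
    hK.aemeasurable (by fun_prop) measurable_uncurry_offspringSum
    (fun _ _ _ ↦ offspringSum_nonneg _ _ _)
    (fun a u ↦ memLp_offspringSum hX u a)
    (fun a u ↦ integral_offspringSum (fun j i a ↦ (hX j i a).integrable one_le_two) hm u a)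
    (fun a ↦ memLp_finsetSum _ fun i _ ↦ (hKmem i).mul_const _)
    (fun a b u ↦ covariance_offspringSum hX hindep hV u a b)
    (fun a b ↦ integrable_finsetSum _ fun i _ ↦ (hKint i).mul_const _),
    covariance_fun_sum_mul_fun_sum_mul hKmem,
    integral_finsetSum _ fun i _ ↦ (hKint i).mul_const _]
  simp only [integral_mul_const]

end Offspring

end ProbabilityTheory

theorem covariance_of_random_sum_general
    {Ω : Type*} [MeasureSpace Ω] [IsProbabilityMeasure (ℙ : Measure Ω)]
    (p : ℕ) (z : Fin p → ℕ)
    (M : Ω → Fin p → ℤ) (hMmeas : Measurable M)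
    (hMsq : ∀ i, MemLp (fun ω => (M ω i : ℝ)) 2 ℙ)
    (hMz : ∀ ω i, -(z i : ℤ) ≤ M ω i)
    (X : ℕ → Fin p → Ω → Fin p → ℕ) (hXmeas : ∀ j i, Measurable (X j i))
    (hXsq : ∀ j i a, MemLp (fun ω => (X j i ω a : ℝ)) 2 ℙ)
    (hXid : ∀ j i, Measure.map (X j i) ℙ = Measure.map (X 0 i) ℙ)
    (hindep : iIndepFun
      (fun o : Option (ℕ × Fin p) =>
        Option.elim o M (fun ji ω a => ((X ji.1 ji.2 ω a : ℤ)))) ℙ)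
    (S : Ω → Fin p → ℕ)
    (hS : ∀ ω a, S ω a = ∑ i, ∑ j ∈ Finset.range (((z i : ℤ) + M ω i).toNat), X j i ω a)
    -- the offspring means `m i = E[X_{1,i}]` (a vector for each type `i`)
    (m : Fin p → Fin p → ℝ) (hm : ∀ i a, m i a = ∫ ω, (X 0 i ω a : ℝ))
    -- the offspring covariance matrices `Σ_i = Cov(X_{1,i})`
    (Sx : Fin p → Fin p → Fin p → ℝ)
    (hSx : ∀ i a b, Sx i a b =
      ∫ ω, ((X 0 i ω a : ℝ) - m i a) * ((X 0 i ω b : ℝ) - m i b))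
    -- the covariance matrix of the migration vector `M`
    (CM : Fin p → Fin p → ℝ)
    (hCM : ∀ a b, CM a b =
      ∫ ω, ((M ω a : ℝ) - ∫ ω', (M ω' a : ℝ)) * ((M ω b : ℝ) - ∫ ω', (M ω' b : ℝ))) :
    ∀ a b,
      ∫ ω, ((S ω a : ℝ) - ∫ ω', (S ω' a : ℝ)) * ((S ω b : ℝ) - ∫ ω', (S ω' b : ℝ)) =
        (∑ i, ((z i : ℝ) + ∫ ω, (M ω i : ℝ)) * Sx i a b) +
          ∑ i, ∑ j, m i a * CM i j * m j b := by
  intro a b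
  let count : (Fin p → ℤ) → Fin p → ℕ := fun v i ↦ ((z i : ℤ) + v i).toNat
  have hcount : ∀ i, (fun ω ↦ (count (M ω) i : ℝ)) = fun ω ↦ z i + (M ω i : ℝ) :=
    fun i ↦ funext fun ω ↦ by
      exact_mod_cast Int.toNat_of_nonneg (by linarith [hMz ω i] : 0 ≤ (z i : ℤ) + M ω i)
  have hMint : ∀ i, Integrable (fun ω ↦ (M ω i : ℝ)) := fun i ↦ (hMsq i).integrable one_le_two
  have hid : ∀ j i, IdentDistrib (X j i) (X 0 i) ℙ ℙ := fun j i ↦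
    ⟨(hXmeas j i).aemeasurable, (hXmeas 0 i).aemeasurable, hXid j i⟩
  have hmean : ∀ j i a, ∫ ω, (X j i ω a : ℝ) = m i a := fun j i a ↦ by
    rw [hm]
    exact ((hid j i).comp (u := fun v ↦ (v a : ℝ)) .of_discrete).integral_eq
  have hcov : ∀ j i a b,
      cov[fun ω ↦ (X j i ω a : ℝ), fun ω ↦ (X j i ω b : ℝ)] = Sx i a b := fun j i a b ↦ by
    rw [hSx, hm, hm]
    exact ((hid j i).comp (u := fun v ↦ ((v a : ℝ), (v b : ℝ))) .of_discrete).covariance_eq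
  have hS' : ∀ a,
      (fun ω ↦ (S ω a : ℝ)) = fun ω ↦ offspringSum (count (M ω)) (fun j i ↦ X j i ω) a :=
    fun a ↦ funext fun ω ↦ by simp [hS, offspringSum, count]
  change cov[fun ω ↦ (S ω a : ℝ), fun ω ↦ (S ω b : ℝ)] = _
  rw [hS', hS', covariance_offspringSum_comp (K := fun ω ↦ count (M ω)) hXmeas hXsq
    (fun _ _ _ _ hne ↦ hindep.indepFun_offspring_coord hne) hmean hcov
    ((Measurable.of_discrete (f := count)).comp hMmeas)
    (fun i ↦ by rw [hcount]; exact (memLp_const (z i : ℝ)).add (hMsq i))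
    ((hindep.indepFun_offspringArray hMmeas hXmeas).comp (φ := count) .of_discrete measurable_id)]
  simp only [hcount, covariance_const_add_left (hMint _), covariance_const_add_right (hMint _),
    hCM, integral_add (integrable_const _) (hMint _), integral_const, probReal_univ, one_smul]
  rfl

/-- One-step version of equation (4) of Proposition 1: with the notation of Proposition 1,
the covariance matrix of the random sum `S = Σ_i Σ_{j=1}^{z i + M i} X j i` satisfies
`Cov(S) = Σ_i (z i + E[M i]) Σ_i + m Cov(M) mᵀ`, entrywise. -/
theorem covariance_of_random_sum
    {Ω : Type*} [MeasureSpace Ω] [IsProbabilityMeasure (ℙ : Measure Ω)]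
    (p : ℕ) (hp : 0 < p) (z : Fin p → ℕ)
    (M : Ω → Fin p → ℤ) (hMmeas : Measurable M)
    (hMsq : ∀ i, MemLp (fun ω => (M ω i : ℝ)) 2 ℙ)
    (hMz : ∀ ω i, -(z i : ℤ) ≤ M ω i)
    (X : ℕ → Fin p → Ω → Fin p → ℕ) (hXmeas : ∀ j i, Measurable (X j i))
    (hXsq : ∀ j i a, MemLp (fun ω => (X j i ω a : ℝ)) 2 ℙ)
    (hXid : ∀ j i, Measure.map (X j i) ℙ = Measure.map (X 0 i) ℙ)
    (hindep : iIndepFun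
      (fun o : Option (ℕ × Fin p) =>
        Option.elim o M (fun ji ω a => ((X ji.1 ji.2 ω a : ℤ)))) ℙ)
    (S : Ω → Fin p → ℕ)
    (hS : ∀ ω a, S ω a = ∑ i, ∑ j ∈ Finset.range (((z i : ℤ) + M ω i).toNat), X j i ω a)
    -- the offspring means `m i = E[X_{1,i}]` (a vector for each type `i`)
    (m : Fin p → Fin p → ℝ) (hm : ∀ i a, m i a = ∫ ω, (X 0 i ω a : ℝ))
    -- the offspring covariance matrices `Σ_i = Cov(X_{1,i})`
    (Sx : Fin p → Fin p → Fin p → ℝ)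
    (hSx : ∀ i a b, Sx i a b =
      ∫ ω, ((X 0 i ω a : ℝ) - m i a) * ((X 0 i ω b : ℝ) - m i b))
    -- the covariance matrix of the migration vector `M`
    (CM : Fin p → Fin p → ℝ)
    (hCM : ∀ a b, CM a b =
      ∫ ω, ((M ω a : ℝ) - ∫ ω', (M ω' a : ℝ)) * ((M ω b : ℝ) - ∫ ω', (M ω' b : ℝ))) :
    ∀ a b,
      ∫ ω, ((S ω a : ℝ) - ∫ ω', (S ω' a : ℝ)) * ((S ω b : ℝ) - ∫ ω', (S ω' b : ℝ)) =
        (∑ i, ((z i : ℝ) + ∫ ω, (M ω i : ℝ)) * Sx i a b) +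
          ∑ i, ∑ j, m i a * CM i j * m j b :=
  covariance_of_random_sum_general p z M hMmeas hMsq hMz X hXmeas hXsq hXid hindep S hS m hm Sx hSx
    CM hCM
end

section
/- Theorem 1(a): Let (Z_k)_{k∈ℤ₊} be an MBPM satisfying Hypotheses A and B. Suppose that for each i ∈ {1,…,p} there exists N such that h_i(z) ≤ 0 for all z ∈ ℤ₊^p with ‖z‖ ≥ N. Then P(‖Z_n‖ → ∞ as n → ∞) = 0. -/
/-!
The weighted population `Y n = ∑ i, u i * Z n i`, with `u` the left Perron eigenvector of the
mean matrix, has conditional mean increment `∑ i, u i * h (Z n) i`: branching preserves its mean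
and only migration moves it. Hence `Y` is a nonnegative supermartingale as long as every mean
migration `h (Z n) i` is nonpositive, which eventually holds if `‖Z n‖ → ∞`. Started at a time
`r` on the event `{Y r ≤ L}` (no moment of `Z 0` is assumed), a Ville-type maximal inequality
shows that `Y` reaches level `a` before leaving that region with probability at most `L / a`, so
it cannot tend to infinity there.

Conditional means are computed without conditional expectations: the offspring and migration
variables of generation `k` are independent of the σ-algebra generated by `Z 0` and the earlier
generations, and the discrete current state can be frozen.
-/

open MeasureTheory ProbabilityTheory Filter Topology Finset
open scoped ENNReal

section Conditioning

variable {Ω β : Type*} {G mΩ : MeasurableSpace Ω} {μ : Measure Ω}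

theorem measurable_comp_apply_of_countable [MeasurableSpace β] [Countable β]
    [MeasurableSingletonClass β] {γ : Type*} [MeasurableSpace γ] {V : Ω → β} (hV : Measurable V)
    {f : β → Ω → γ} (hf : ∀ b, Measurable (f b)) : Measurable fun ω => f (V ω) ω :=
  (measurable_from_prod_countable_left (f := fun q : Ω × β => f q.2 q.1) hf).comp
    (measurable_id.prodMk hV)

theorem setLIntegral_eq_lintegral_mul_of_indep {m : MeasurableSpace Ω} (hm : m ≤ mΩ)
    (hG : G ≤ mΩ) (hind : Indep m G μ) {f : Ω → ℝ≥0∞} (hf : Measurable[m] f) {E : Set Ω}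
    (hE : MeasurableSet[G] E) :
    ∫⁻ ω in E, f ω ∂μ = (∫⁻ ω, f ω ∂μ) * μ E := by
  have hE' : Measurable[G] (E.indicator (1 : Ω → ℝ≥0∞)) := measurable_const.indicator hE
  rw [← lintegral_indicator (hG _ hE), ← lintegral_indicator_one (hG _ hE),
    ← lintegral_mul_eq_lintegral_mul_lintegral_of_independent_measurableSpace hm hG hind hf hE']
  congr 1 with ω
  by_cases hω : ω ∈ E <;> simp [hω]

theorem setLIntegral_comp_eq_of_setLIntegral_eq_mul [MeasurableSpace β] [Countable β]
    [MeasurableSingletonClass β] (hG : G ≤ mΩ) {V : Ω → β} (hV : Measurable[G] V)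
    {ξ : β → Ω → ℝ≥0∞} {c : β → ℝ≥0∞}
    (hξ : ∀ b E, MeasurableSet[G] E → ∫⁻ ω in E, ξ b ω ∂μ = c b * μ E)
    {A : Set Ω} (hA : MeasurableSet[G] A) :
    ∫⁻ ω in A, ξ (V ω) ω ∂μ = ∫⁻ ω in A, c (V ω) ∂μ := by
  have hpiece : ∀ b, MeasurableSet[G] (A ∩ V ⁻¹' {b}) :=
    fun b => hA.inter (hV (measurableSet_singleton b))
  have hsplit : ∀ f : Ω → ℝ≥0∞, ∫⁻ ω in A, f ω ∂μ = ∑' b, ∫⁻ ω in A ∩ V ⁻¹' {b}, f ω ∂μ := by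
    intro f
    conv_lhs => rw [show A = ⋃ b, A ∩ V ⁻¹' {b} by ext; simp]
    exact lintegral_iUnion (fun b => hG _ (hpiece b))
      (fun b b' hbb' => ((pairwise_disjoint_fiber V) hbb').mono
        Set.inter_subset_right Set.inter_subset_right) f
  rw [hsplit, hsplit]
  refine tsum_congr fun b => ?_
  have hfreeze : ∀ f : β → Ω → ℝ≥0∞,
      ∫⁻ ω in A ∩ V ⁻¹' {b}, f (V ω) ω ∂μ = ∫⁻ ω in A ∩ V ⁻¹' {b}, f b ω ∂μ :=
    fun f => setLIntegral_congr_fun (hG _ (hpiece b)) fun ω hω => by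
      rw [show V ω = b from hω.2]
  rw [hfreeze ξ, hfreeze fun b _ => c b, hξ b _ (hpiece b), setLIntegral_const]

theorem setLIntegral_sum_range_eq_mul (hG : G ≤ mΩ) {N : Ω → ℕ} (hN : Measurable[G] N)
    {ξ : ℕ → Ω → ℝ≥0∞} (hξ : ∀ j, Measurable (ξ j)) {c : ℝ≥0∞}
    (hξmean : ∀ j E, MeasurableSet[G] E → ∫⁻ ω in E, ξ j ω ∂μ = c * μ E)
    {A : Set Ω} (hA : MeasurableSet[G] A) :
    ∫⁻ ω in A, ∑ j ∈ range (N ω), ξ j ω ∂μ = c * ∫⁻ ω in A, (N ω : ℝ≥0∞) ∂μ := by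
  rw [setLIntegral_comp_eq_of_setLIntegral_eq_mul (ξ := fun n ω => ∑ j ∈ range n, ξ j ω)
      (c := fun n => n * c) hG hN (fun n E hE => ?_) hA,
    lintegral_mul_const c (f := fun ω => (N ω : ℝ≥0∞))
      (measurable_from_nat.comp (hN.mono hG le_rfl)),
    mul_comm]
  rw [lintegral_finsetSum _ fun j _ => hξ j]
  simp only [hξmean _ E hE, sum_const, card_range, nsmul_eq_mul, mul_assoc]

theorem lintegral_natCast_eq_ofReal_integral {f : Ω → ℕ} (hf : Integrable (fun ω => (f ω : ℝ)) μ) :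
    ∫⁻ ω, (f ω : ℝ≥0∞) ∂μ = ENNReal.ofReal (∫ ω, (f ω : ℝ) ∂μ) := by
  rw [ofReal_integral_eq_lintegral_ofReal hf (Eventually.of_forall fun ω => Nat.cast_nonneg _)]
  simp only [ENNReal.ofReal_natCast]

end Conditioning

theorem ENNReal.eq_zero_of_forall_natCast_mul_le {x C : ℝ≥0∞} (hC : C ≠ ∞)
    (h : ∀ n : ℕ, (n : ℝ≥0∞) * x ≤ C) : x = 0 := by
  by_contra hx
  obtain ⟨n, hn⟩ := ENNReal.exists_nat_gt (ENNReal.div_lt_top hC hx).ne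
  exact (ENNReal.div_lt_iff (Or.inl hx) (Or.inr hC)).1 hn |>.not_ge (h n)

section Supermartingale

variable {Ω : Type*} {mΩ : MeasurableSpace Ω} {μ : Measure Ω} {ℱ : Filtration ℕ mΩ}
  {Y : ℕ → Ω → ℝ≥0∞} {S : ℕ → Set Ω}

theorem mul_measure_add_setLIntegral_succ_le {n : ℕ} (hY : Measurable[ℱ n] (Y n))
    (hS : MeasurableSet[ℱ n] (S n))
    (hdrift : ∀ A, MeasurableSet[ℱ n] A → A ⊆ S n →
      ∫⁻ ω in A, Y (n + 1) ω ∂μ ≤ ∫⁻ ω in A, Y n ω ∂μ)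
    {B : Set Ω} (hB : MeasurableSet[ℱ n] B) (a : ℝ≥0∞) :
    a * μ (B ∩ {ω | a ≤ Y n ω}) + ∫⁻ ω in B ∩ ({ω | Y n ω < a} ∩ S n), Y (n + 1) ω ∂μ ≤
      ∫⁻ ω in B, Y n ω ∂μ := by
  have hcont : MeasurableSet[ℱ n] (B ∩ ({ω | Y n ω < a} ∩ S n)) :=
    hB.inter ((hY measurableSet_Iio).inter hS)
  calc a * μ (B ∩ {ω | a ≤ Y n ω}) + ∫⁻ ω in B ∩ ({ω | Y n ω < a} ∩ S n), Y (n + 1) ω ∂μ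
      ≤ ∫⁻ ω in B ∩ {ω | a ≤ Y n ω}, Y n ω ∂μ +
          ∫⁻ ω in B ∩ ({ω | Y n ω < a} ∩ S n), Y n ω ∂μ := by
        refine add_le_add ?_ (hdrift _ hcont fun ω hω => hω.2.2)
        rw [← setLIntegral_const]
        exact setLIntegral_mono (hY.mono (ℱ.le n) le_rfl) fun ω hω => hω.2
    _ = ∫⁻ ω in (B ∩ {ω | a ≤ Y n ω}) ∪ (B ∩ ({ω | Y n ω < a} ∩ S n)), Y n ω ∂μ :=
        (lintegral_union (ℱ.le n _ hcont) (Set.disjoint_left.2 fun ω hstop hgo =>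
          not_lt.2 (show a ≤ Y n ω from hstop.2) hgo.2.1)).symm
    _ ≤ ∫⁻ ω in B, Y n ω ∂μ :=
        lintegral_mono_set (Set.union_subset Set.inter_subset_left Set.inter_subset_left)

/-- Stop the process when it leaves `S` or first reaches level `a`. -/
theorem mul_measure_le_setLIntegral_of_drift_le (hY : ∀ k, Measurable[ℱ k] (Y k))
    (hS : ∀ k, MeasurableSet[ℱ k] (S k))
    (hdrift : ∀ k A, MeasurableSet[ℱ k] A → A ⊆ S k →
      ∫⁻ ω in A, Y (k + 1) ω ∂μ ≤ ∫⁻ ω in A, Y k ω ∂μ)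
    {A₀ : Set Ω} (hA₀ : MeasurableSet[ℱ 0] A₀) (a : ℝ≥0∞) :
    a * μ {ω | ω ∈ A₀ ∧ (∀ k, ω ∈ S k) ∧ ∃ k, a ≤ Y k ω} ≤ ∫⁻ ω in A₀, Y 0 ω ∂μ := by
  set A : ℕ → Set Ω := fun n => {ω | ω ∈ A₀ ∧ ∀ j < n, Y j ω < a ∧ ω ∈ S j} with hA
  have hA_succ : ∀ n, A (n + 1) = A n ∩ ({ω | Y n ω < a} ∩ S n) := by
    intro n; ext ω
    simp only [hA, Set.mem_ofPred_eq, Set.mem_inter_iff, Nat.forall_lt_succ_right, and_assoc]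
  have hAmeas : ∀ n, MeasurableSet[ℱ n] (A n) := by
    intro n
    induction n with
    | zero => simpa [hA] using hA₀
    | succ n ih =>
      rw [hA_succ]
      exact ℱ.mono n.le_succ _ (ih.inter ((hY n measurableSet_Iio).inter (hS n)))
  have hinv : ∀ n, a * ∑ t ∈ range n, μ (A t ∩ {ω | a ≤ Y t ω}) + ∫⁻ ω in A n, Y n ω ∂μ ≤
      ∫⁻ ω in A₀, Y 0 ω ∂μ := by
    intro n
    induction n with
    | zero => simp [hA]
    | succ n ih =>
      calc a * ∑ t ∈ range (n + 1), μ (A t ∩ {ω | a ≤ Y t ω}) + ∫⁻ ω in A (n + 1), Y (n + 1) ω ∂μ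
          = a * ∑ t ∈ range n, μ (A t ∩ {ω | a ≤ Y t ω}) +
              (a * μ (A n ∩ {ω | a ≤ Y n ω}) + ∫⁻ ω in A (n + 1), Y (n + 1) ω ∂μ) := by
            rw [sum_range_succ, mul_add, add_assoc]
        _ ≤ a * ∑ t ∈ range n, μ (A t ∩ {ω | a ≤ Y t ω}) + ∫⁻ ω in A n, Y n ω ∂μ := by
            rw [hA_succ]
            exact add_le_add_right (mul_measure_add_setLIntegral_succ_le (hY n) (hS n)
              (hdrift n) (hAmeas n) a) _
        _ ≤ ∫⁻ ω in A₀, Y 0 ω ∂μ := ih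
  have hcover : {ω | ω ∈ A₀ ∧ (∀ k, ω ∈ S k) ∧ ∃ k, a ≤ Y k ω} ⊆
      ⋃ n, A n ∩ {ω | a ≤ Y n ω} := by
    classical
    rintro ω ⟨hω₀, hωS, hhit⟩
    exact Set.mem_iUnion.2 ⟨Nat.find hhit,
      ⟨hω₀, fun j hj => ⟨not_le.1 (Nat.find_min hhit hj), hωS j⟩⟩, Nat.find_spec hhit⟩
  calc a * μ {ω | ω ∈ A₀ ∧ (∀ k, ω ∈ S k) ∧ ∃ k, a ≤ Y k ω}
      ≤ a * ∑' n, μ (A n ∩ {ω | a ≤ Y n ω}) := by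
        gcongr; exact (measure_mono hcover).trans (measure_iUnion_le _)
    _ = ⨆ n, a * ∑ t ∈ range n, μ (A t ∩ {ω | a ≤ Y t ω}) := by
        rw [ENNReal.tsum_eq_iSup_nat, ENNReal.mul_iSup]
    _ ≤ ∫⁻ ω in A₀, Y 0 ω ∂μ := iSup_le fun n => le_self_add.trans (hinv n)

theorem measure_eventually_mem_tendsto_top_eq_zero [IsFiniteMeasure μ]
    (hY : ∀ k, Measurable[ℱ k] (Y k)) (hYfin : ∀ k ω, Y k ω ≠ ∞)
    (hS : ∀ k, MeasurableSet[ℱ k] (S k))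
    (hdrift : ∀ k A, MeasurableSet[ℱ k] A → A ⊆ S k →
      ∫⁻ ω in A, Y (k + 1) ω ∂μ ≤ ∫⁻ ω in A, Y k ω ∂μ) :
    μ {ω | (∀ᶠ k in atTop, ω ∈ S k) ∧ Tendsto (fun k => Y k ω) atTop (𝓝 ∞)} = 0 := by
  set E : ℕ → ℕ → Set Ω := fun r L =>
    {ω | ω ∈ {ω | Y r ω ≤ L} ∧ (∀ k, ω ∈ S (r + k)) ∧ ∀ n : ℕ, ∃ k, (n : ℝ≥0∞) ≤ Y (r + k) ω}
  have hcover : {ω | (∀ᶠ k in atTop, ω ∈ S k) ∧ Tendsto (fun k => Y k ω) atTop (𝓝 ∞)} ⊆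
      ⋃ r, ⋃ L, E r L := by
    rintro ω ⟨hωS, hωY⟩
    obtain ⟨r, hr⟩ := eventually_atTop.1 hωS
    obtain ⟨L, hL⟩ := ENNReal.exists_nat_gt (hYfin r ω)
    refine Set.mem_iUnion₂.2 ⟨r, L, hL.le, fun k => hr _ (Nat.le_add_right r k), fun n => ?_⟩
    obtain ⟨k, hk⟩ :=
      ((tendsto_add_atTop_nat r).eventually (ENNReal.tendsto_nhds_top_iff_nat.1 hωY n)).exists
    exact ⟨k, by rw [add_comm]; exact hk.le⟩
  refine measure_mono_null hcover (measure_iUnion_null fun r => measure_iUnion_null fun L => ?_)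
  let ℱr : Filtration ℕ mΩ :=
    ⟨fun k => ℱ (r + k), fun i j hij => ℱ.mono (Nat.add_le_add_left hij r), fun k => ℱ.le _⟩
  have hA₀ : MeasurableSet[ℱr 0] {ω | Y r ω ≤ L} := hY r measurableSet_Iic
  refine ENNReal.eq_zero_of_forall_natCast_mul_le (C := L * μ Set.univ)
    (ENNReal.mul_ne_top (ENNReal.natCast_ne_top L) (measure_ne_top μ _)) fun n => ?_
  calc (n : ℝ≥0∞) * μ (E r L)
      ≤ n * μ {ω | ω ∈ {ω | Y r ω ≤ L} ∧ (∀ k, ω ∈ S (r + k)) ∧ ∃ k, (n : ℝ≥0∞) ≤ Y (r + k) ω} :=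
        by gcongr; exact fun ω hω => ⟨hω.1, hω.2.1, hω.2.2 n⟩
    _ ≤ ∫⁻ ω in {ω | Y r ω ≤ L}, Y r ω ∂μ :=
        mul_measure_le_setLIntegral_of_drift_le (ℱ := ℱr) (fun k => hY (r + k))
          (fun k => hS (r + k)) (fun k => hdrift (r + k)) hA₀ n
    _ ≤ ∫⁻ _ in {ω | Y r ω ≤ L}, (L : ℝ≥0∞) ∂μ :=
        setLIntegral_mono measurable_const fun ω hω => hω
    _ ≤ L * μ Set.univ := by
        rw [setLIntegral_const]; gcongr; exact Set.subset_univ _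

end Supermartingale

section Branching

variable {Ω ι : Type*} {G G' mΩ : MeasurableSpace Ω} {μ : Measure Ω} {p : ℕ}

noncomputable def weightedCount [Fintype ι] (w : ι → ℝ≥0∞) (z : ι → ℕ) : ℝ≥0∞ := ∑ i, w i * z i

theorem weightedCount_ne_top [Fintype ι] {w : ι → ℝ≥0∞} (hw : ∀ i, w i ≠ ∞) (z : ι → ℕ) :
    weightedCount w z ≠ ∞ :=
  ENNReal.sum_ne_top.2 fun i _ => ENNReal.mul_ne_top (hw i) (ENNReal.natCast_ne_top _)

theorem tendsto_weightedCount_of_tendsto_norm [Fintype ι] {u : ι → ℝ} (hu : ∀ i, 0 < u i)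
    {α : Type*} {l : Filter α} {z : α → ι → ℕ}
    (hz : Tendsto (fun n => ‖fun i => (z n i : ℝ)‖) l atTop) :
    Tendsto (fun n => weightedCount (fun i => ENNReal.ofReal (u i)) (z n)) l (𝓝 ∞) := by
  obtain ⟨c, hc, hcu⟩ : ∃ c > 0, ∀ i, c ≤ u i := by
    rcases isEmpty_or_nonempty ι with hι | hι
    · exact ⟨1, one_pos, fun i => isEmptyElim i⟩
    · obtain ⟨i₀, hi₀⟩ := Finite.exists_min u
      exact ⟨u i₀, hu i₀, hi₀⟩
  refine tendsto_nhds_top_mono (ENNReal.tendsto_ofReal_atTop.comp (hz.const_mul_atTop hc))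
    (Eventually.of_forall fun n => ?_)
  have hsum : 0 ≤ ∑ j, u j * z n j := sum_nonneg fun j _ => mul_nonneg (hu j).le (Nat.cast_nonneg _)
  have hnorm : c * ‖fun i => (z n i : ℝ)‖ ≤ ∑ j, u j * z n j := by
    rw [← le_div_iff₀' hc, pi_norm_le_iff_of_nonneg (div_nonneg hsum hc.le)]
    intro i
    rw [Real.norm_natCast, le_div_iff₀' hc]
    calc c * z n i ≤ u i * z n i := by gcongr; exact hcu i
      _ ≤ ∑ j, u j * z n j := single_le_sum (f := fun j => u j * z n j)
          (fun j _ => mul_nonneg (hu j).le (Nat.cast_nonneg _)) (mem_univ i)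
  calc ENNReal.ofReal (c * ‖fun i => (z n i : ℝ)‖) ≤ ENNReal.ofReal (∑ j, u j * z n j) :=
        ENNReal.ofReal_le_ofReal hnorm
    _ = weightedCount (fun i => ENNReal.ofReal (u i)) (z n) := by
        rw [weightedCount, ENNReal.ofReal_sum_of_nonneg fun j _ =>
          mul_nonneg (hu j).le (Nat.cast_nonneg _)]
        simp only [ENNReal.ofReal_mul (hu _).le, ENNReal.ofReal_natCast]

/-- Type-`i` parents after the migration `w` from the state `z`; the truncation `toNat` is
vacuous when `-z ≤ w`. -/
def migrated (z : Fin p → ℕ) (w : Fin p → ℤ) (i : Fin p) : ℕ := ((z i : ℤ) + w i).toNat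

theorem natCast_migrated {z : Fin p → ℕ} {w : Fin p → ℤ} {i : Fin p} (hw : -(z i : ℤ) ≤ w i) :
    (migrated z w i : ℝ) = z i + w i := by
  have h : ((migrated z w i : ℕ) : ℤ) = z i + w i := Int.toNat_of_nonneg (by omega)
  exact_mod_cast h

/-- One generation of an MBPM: `ξ j i` is the offspring vector of the `j`-th type-`i` parent. -/
def branchStep (V : Ω → Fin p → ℕ) (W : (Fin p → ℕ) → Ω → Fin p → ℤ)
    (ξ : ℕ → Fin p → Ω → Fin p → ℕ) (ω : Ω) (a : Fin p) : ℕ :=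
  ∑ i, ∑ j ∈ range (migrated (V ω) (W (V ω) ω) i), ξ j i ω a

variable {V : Ω → Fin p → ℕ} {W : (Fin p → ℕ) → Ω → Fin p → ℤ}
  {ξ : ℕ → Fin p → Ω → Fin p → ℕ}

theorem measurable_migrated (hV : Measurable[G] V) (hW : ∀ z, Measurable[G] (W z)) :
    Measurable[G] fun ω => migrated (V ω) (W (V ω) ω) :=
  measurable_comp_apply_of_countable (f := fun z ω => migrated z (W z ω)) hV fun z =>
    (measurable_of_countable (migrated z)).comp (hW z)

theorem measurable_branchStep (hV : Measurable[G] V) (hW : ∀ z, Measurable[G] (W z))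
    (hξ : ∀ j i, Measurable[G] (ξ j i)) : Measurable[G] (branchStep V W ξ) :=
  measurable_comp_apply_of_countable (f := fun n ω a => ∑ i, ∑ j ∈ range (n i), ξ j i ω a)
    (measurable_migrated hV hW) fun _ => measurable_pi_lambda _ fun a =>
      Finset.measurable_sum _ fun i _ => Finset.measurable_sum _ fun j _ =>
        (measurable_pi_apply a).comp (hξ j i)

theorem setLIntegral_branchStep_eq (hGG' : G ≤ G') (hG' : G' ≤ mΩ)
    (hV : Measurable[G] V) (hW : ∀ z, Measurable[G'] (W z)) (hξ : ∀ j i, Measurable (ξ j i))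
    {mξ : Fin p → Fin p → ℝ≥0∞}
    (hξmean : ∀ j i a E, MeasurableSet[G'] E → ∫⁻ ω in E, (ξ j i ω a : ℝ≥0∞) ∂μ = mξ i a * μ E)
    {c : (Fin p → ℕ) → Fin p → ℝ≥0∞}
    (hWmean : ∀ z i E, MeasurableSet[G] E →
      ∫⁻ ω in E, (migrated z (W z ω) i : ℝ≥0∞) ∂μ = c z i * μ E)
    {A : Set Ω} (hA : MeasurableSet[G] A) (a : Fin p) :
    ∫⁻ ω in A, (branchStep V W ξ ω a : ℝ≥0∞) ∂μ = ∑ i, mξ i a * ∫⁻ ω in A, c (V ω) i ∂μ := by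
  have hN : ∀ i, Measurable[G'] fun ω => migrated (V ω) (W (V ω) ω) i := fun i =>
    (measurable_pi_apply i).comp (measurable_migrated (hV.mono hGG' le_rfl) hW)
  have hξa : ∀ j i, Measurable fun ω => (ξ j i ω a : ℝ≥0∞) := fun j i =>
    measurable_from_nat.comp ((measurable_pi_apply a).comp (hξ j i))
  simp only [branchStep, Nat.cast_sum]
  rw [lintegral_finsetSum _ fun i _ => measurable_comp_apply_of_countable
    (f := fun n ω => ∑ j ∈ range n, (ξ j i ω a : ℝ≥0∞)) ((hN i).mono hG' le_rfl)
    fun n => Finset.measurable_sum _ fun j _ => hξa j i]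
  refine sum_congr rfl fun i _ => ?_
  rw [setLIntegral_sum_range_eq_mul hG' (hN i) (fun j => hξa j i)
      (fun j E hE => hξmean j i a E hE) (hGG' _ hA),
    setLIntegral_comp_eq_of_setLIntegral_eq_mul (ξ := fun z ω => (migrated z (W z ω) i : ℝ≥0∞))
      (c := fun z => c z i) (hGG'.trans hG') hV (fun z E hE => hWmean z i E hE) hA]

/-- Since `w` is a left eigenvector of the mean matrix for the eigenvalue `1`, branching preserves
the mean weighted count; only the migration can increase it. -/
theorem setLIntegral_weightedCount_branchStep_le (hGG' : G ≤ G')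
    (hG' : G' ≤ mΩ) (hV : Measurable[G] V) (hW : ∀ z, Measurable[G'] (W z))
    (hξ : ∀ j i, Measurable (ξ j i)) {mξ : Fin p → Fin p → ℝ≥0∞}
    (hξmean : ∀ j i a E, MeasurableSet[G'] E → ∫⁻ ω in E, (ξ j i ω a : ℝ≥0∞) ∂μ = mξ i a * μ E)
    {c : (Fin p → ℕ) → Fin p → ℝ≥0∞}
    (hWmean : ∀ z i E, MeasurableSet[G] E →
      ∫⁻ ω in E, (migrated z (W z ω) i : ℝ≥0∞) ∂μ = c z i * μ E)
    {w : Fin p → ℝ≥0∞} (hw : ∀ i, ∑ a, w a * mξ i a = w i)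
    {A : Set Ω} (hA : MeasurableSet[G] A) (hc : ∀ ω ∈ A, ∀ i, c (V ω) i ≤ V ω i) :
    ∫⁻ ω in A, weightedCount w (branchStep V W ξ ω) ∂μ ≤ ∫⁻ ω in A, weightedCount w (V ω) ∂μ := by
  have hVm : Measurable V := hV.mono (hGG'.trans hG') le_rfl
  have hZ' : Measurable (branchStep V W ξ) :=
    measurable_branchStep hVm (fun z => (hW z).mono hG' le_rfl) hξ
  have hcount : ∀ {Z : Ω → Fin p → ℕ}, Measurable Z →
      ∫⁻ ω in A, weightedCount w (Z ω) ∂μ = ∑ a, w a * ∫⁻ ω in A, (Z ω a : ℝ≥0∞) ∂μ := by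
    intro Z hZ
    simp only [weightedCount]
    rw [lintegral_finsetSum (f := fun a ω => w a * (Z ω a : ℝ≥0∞)) _ fun a _ =>
      (measurable_from_nat.comp ((measurable_pi_apply a).comp hZ)).const_mul _]
    exact sum_congr rfl fun a _ => lintegral_const_mul _
      (measurable_from_nat.comp ((measurable_pi_apply a).comp hZ))
  calc ∫⁻ ω in A, weightedCount w (branchStep V W ξ ω) ∂μ
      = ∑ i, w i * ∫⁻ ω in A, c (V ω) i ∂μ := by
        simp only [hcount hZ', setLIntegral_branchStep_eq hGG' hG' hV hW hξ hξmean hWmean hA,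
          mul_sum]
        rw [sum_comm]
        simp only [← mul_assoc, ← sum_mul, hw]
    _ ≤ ∑ i, w i * ∫⁻ ω in A, (V ω i : ℝ≥0∞) ∂μ := by
        refine sum_le_sum fun i _ => mul_le_mul_right ?_ _
        exact setLIntegral_mono (measurable_from_nat.comp ((measurable_pi_apply i).comp hVm))
          fun ω hω => hc ω hω i
    _ = ∫⁻ ω in A, weightedCount w (V ω) ∂μ := (hcount hVm).symm

end Branching

section GeneratedSigmaAlgebra

variable {Ω ι β : Type*} {mΩ : MeasurableSpace Ω} {μ : Measure Ω} [MeasurableSpace β]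
  {F : ι → Ω → β} {I : Set ι}

abbrev sigmaOf (F : ι → Ω → β) (I : Set ι) : MeasurableSpace Ω :=
  ⨆ i ∈ I, MeasurableSpace.comap (F i) ‹MeasurableSpace β›

theorem sigmaOf_mono {J : Set ι} (h : I ⊆ J) : sigmaOf F I ≤ sigmaOf F J := biSup_mono h

theorem sigmaOf_le (hF : ∀ i, Measurable (F i)) (I : Set ι) : sigmaOf F I ≤ mΩ :=
  iSup₂_le fun i _ => (hF i).comap_le

theorem measurable_sigmaOf {i : ι} (hi : i ∈ I) : Measurable[sigmaOf F I] (F i) :=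
  Measurable.of_comap_le (le_biSup (fun i => MeasurableSpace.comap (F i) _) hi)

theorem setLIntegral_comp_eq_lintegral_mul_of_notMem (hF : ∀ i, Measurable (F i))
    (hind : iIndepFun F μ) {i : ι} (hi : i ∉ I) {φ : β → ℝ≥0∞} (hφ : Measurable φ) {E : Set Ω}
    (hE : MeasurableSet[sigmaOf F I] E) :
    ∫⁻ ω in E, φ (F i ω) ∂μ = (∫⁻ ω, φ (F i ω) ∂μ) * μ E := by
  have hindep : Indep (MeasurableSpace.comap (F i) ‹_›) (sigmaOf F I) μ := by
    simpa using indep_iSup_of_disjoint (fun j => (hF j).comap_le) hind.iIndep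
      (Set.disjoint_singleton_left.2 hi)
  exact setLIntegral_eq_lintegral_mul_of_indep (hF i).comap_le (sigmaOf_le hF I) hindep
    (hφ.comp (comap_measurable (F i))) hE

end GeneratedSigmaAlgebra

section MBPM

variable {Ω : Type*} {mΩ : MeasurableSpace Ω} {μ : Measure Ω} {p : ℕ}
  {Z₀ : Ω → Fin p → ℕ} {X : ℕ → ℕ → Fin p → Ω → Fin p → ℕ} {M : ℕ → (Fin p → ℕ) → Ω → Fin p → ℤ}

abbrev MBPMIndex (p : ℕ) := Unit ⊕ (ℕ × ℕ × Fin p) ⊕ (ℕ × (Fin p → ℕ))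

def mbpmFamily (Z₀ : Ω → Fin p → ℕ) (X : ℕ → ℕ → Fin p → Ω → Fin p → ℕ)
    (M : ℕ → (Fin p → ℕ) → Ω → Fin p → ℤ) : MBPMIndex p → Ω → Fin p → ℤ :=
  Sum.elim (fun _ ω a => (Z₀ ω a : ℤ))
    (Sum.elim (fun kji ω a => (X kji.1 kji.2.1 kji.2.2 ω a : ℤ)) fun kz => M kz.1 kz.2)

/-- Indices of `Z 0`, of the offspring variables of the generations `< k` and of the migration
variables of the generations `< l`. -/
def mbpmPast (p k l : ℕ) : Set (MBPMIndex p) :=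
  {x | Sum.elim (fun _ => True) (Sum.elim (fun y => y.1 < k) fun y => y.1 < l) x}

theorem mbpmPast_mono {k k' l l' : ℕ} (hk : k ≤ k') (hl : l ≤ l') :
    mbpmPast p k l ⊆ mbpmPast p k' l' := by
  rintro (_ | _ | _) hx
  exacts [trivial, lt_of_lt_of_le hx hk, lt_of_lt_of_le hx hl]

theorem measurable_mbpmFamily (hZ₀ : Measurable Z₀) (hX : ∀ k j i, Measurable (X k j i))
    (hM : ∀ k z, Measurable (M k z)) : ∀ x, Measurable (mbpmFamily Z₀ X M x) := by
  rintro (_ | ⟨k, j, i⟩ | ⟨k, z⟩)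
  · exact (measurable_of_countable fun v : Fin p → ℕ => fun a => (v a : ℤ)).comp hZ₀
  · exact (measurable_of_countable fun v : Fin p → ℕ => fun a => (v a : ℤ)).comp (hX k j i)
  · exact hM k z

def mbpmFiltration (hF : ∀ x, Measurable (mbpmFamily Z₀ X M x)) : Filtration ℕ mΩ where
  seq k := sigmaOf (mbpmFamily Z₀ X M) (mbpmPast p k k)
  mono' _ _ h := sigmaOf_mono (mbpmPast_mono h h)
  le' _ := sigmaOf_le hF _

theorem measurable_offspring_sigmaOf {k k' l : ℕ} (hk : k < k') (j : ℕ) (i : Fin p) :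
    Measurable[sigmaOf (mbpmFamily Z₀ X M) (mbpmPast p k' l)] (X k j i) := by
  have hx := measurable_sigmaOf (F := mbpmFamily Z₀ X M) (I := mbpmPast p k' l)
    (i := .inr (.inl (k, j, i))) hk
  exact (measurable_of_countable fun v : Fin p → ℤ => fun a => (v a).toNat).comp hx

theorem measurable_migration_sigmaOf {k k' l : ℕ} (hl : k < l) (z : Fin p → ℕ) :
    Measurable[sigmaOf (mbpmFamily Z₀ X M) (mbpmPast p k' l)] (M k z) :=
  measurable_sigmaOf (F := mbpmFamily Z₀ X M) (I := mbpmPast p k' l) (i := .inr (.inr (k, z))) hl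

theorem measurable_mbpmFiltration {Z : ℕ → Ω → Fin p → ℕ}
    (hF : ∀ x, Measurable (mbpmFamily (Z 0) X M x))
    (hstep : ∀ k, Z (k + 1) = branchStep (Z k) (M k) (X k)) (k : ℕ) :
    Measurable[mbpmFiltration hF k] (Z k) := by
  induction k with
  | zero =>
    exact (measurable_of_countable fun v : Fin p → ℤ => fun a => (v a).toNat).comp
      (measurable_sigmaOf (F := mbpmFamily (Z 0) X M) (I := mbpmPast p 0 0) (i := .inl ()) trivial)
  | succ k ih =>
    rw [hstep]
    exact measurable_branchStep (ih.mono ((mbpmFiltration hF).mono k.le_succ) le_rfl)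
      (measurable_migration_sigmaOf k.lt_succ_self) (measurable_offspring_sigmaOf k.lt_succ_self)

theorem setLIntegral_offspring_eq_mul (hF : ∀ x, Measurable (mbpmFamily Z₀ X M x))
    (hind : iIndepFun (mbpmFamily Z₀ X M) μ) (hX : ∀ k j i, Measurable (X k j i))
    (hXid : ∀ k j i, μ.map (X k j i) = μ.map (X 0 0 i))
    (hXint : ∀ i a, Integrable (fun ω => (X 0 0 i ω a : ℝ)) μ) (k j : ℕ) (i a : Fin p)
    {E : Set Ω} (hE : MeasurableSet[sigmaOf (mbpmFamily Z₀ X M) (mbpmPast p k (k + 1))] E) :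
    ∫⁻ ω in E, (X k j i ω a : ℝ≥0∞) ∂μ = ENNReal.ofReal (∫ ω, (X 0 0 i ω a : ℝ) ∂μ) * μ E := by
  have hfac := setLIntegral_comp_eq_lintegral_mul_of_notMem hF hind
    (i := .inr (.inl (k, j, i))) (by simp [mbpmPast])
    (measurable_of_countable fun v : Fin p → ℤ => ((v a).toNat : ℝ≥0∞)) hE
  have hid : IdentDistrib (X k j i) (X 0 0 i) μ μ :=
    ⟨(hX k j i).aemeasurable, (hX 0 0 i).aemeasurable, hXid k j i⟩
  have hmean : ∫⁻ ω, (X k j i ω a : ℝ≥0∞) ∂μ = ∫⁻ ω, (X 0 0 i ω a : ℝ≥0∞) ∂μ :=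
    (hid.comp (measurable_of_countable fun v : Fin p → ℕ => (v a : ℝ≥0∞))).lintegral_eq
  simp only [mbpmFamily, Sum.elim_inr, Sum.elim_inl, Int.toNat_natCast] at hfac
  rw [hfac, hmean, lintegral_natCast_eq_ofReal_integral (hXint i a)]

theorem setLIntegral_migrated_eq_mul [IsProbabilityMeasure μ]
    (hF : ∀ x, Measurable (mbpmFamily Z₀ X M x))
    (hind : iIndepFun (mbpmFamily Z₀ X M) μ) (hM : ∀ k z, Measurable (M k z))
    (hMz : ∀ k z ω i, -(z i : ℤ) ≤ M k z ω i) (hMid : ∀ k z, μ.map (M k z) = μ.map (M 0 z))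
    (hMint : ∀ z i, Integrable (fun ω => (M 0 z ω i : ℝ)) μ) (k : ℕ) (z : Fin p → ℕ) (i : Fin p)
    {E : Set Ω} (hE : MeasurableSet[sigmaOf (mbpmFamily Z₀ X M) (mbpmPast p k k)] E) :
    ∫⁻ ω in E, (migrated z (M k z ω) i : ℝ≥0∞) ∂μ =
      ENNReal.ofReal (z i + ∫ ω, (M 0 z ω i : ℝ) ∂μ) * μ E := by
  have hfac := setLIntegral_comp_eq_lintegral_mul_of_notMem hF hind
    (i := .inr (.inr (k, z))) (by simp [mbpmPast])
    (measurable_of_countable fun v : Fin p → ℤ => (migrated z v i : ℝ≥0∞)) hE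
  have hid : IdentDistrib (M k z) (M 0 z) μ μ :=
    ⟨(hM k z).aemeasurable, (hM 0 z).aemeasurable, hMid k z⟩
  have hcast : (fun ω => (migrated z (M 0 z ω) i : ℝ)) = fun ω => z i + (M 0 z ω i : ℝ) :=
    funext fun ω => natCast_migrated (hMz 0 z ω i)
  have hmean : ∫⁻ ω, (migrated z (M k z ω) i : ℝ≥0∞) ∂μ =
      ∫⁻ ω, (migrated z (M 0 z ω) i : ℝ≥0∞) ∂μ :=
    (hid.comp (measurable_of_countable fun v : Fin p → ℤ => (migrated z v i : ℝ≥0∞))).lintegral_eq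
  have hint : Integrable (fun ω => (migrated z (M 0 z ω) i : ℝ)) μ :=
    hcast ▸ (integrable_const _).add (hMint z i)
  simp only [mbpmFamily, Sum.elim_inr] at hfac
  rw [hfac, hmean, lintegral_natCast_eq_ofReal_integral hint, hcast,
    integral_add (integrable_const _) (hMint z i), integral_const, probReal_univ, one_smul]

theorem setLIntegral_weightedCount_succ_le [IsProbabilityMeasure μ] {Z : ℕ → Ω → Fin p → ℕ}
    (hF : ∀ x, Measurable (mbpmFamily (Z 0) X M x)) (hind : iIndepFun (mbpmFamily (Z 0) X M) μ)
    (hstep : ∀ k, Z (k + 1) = branchStep (Z k) (M k) (X k))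
    (hX : ∀ k j i, Measurable (X k j i)) (hXid : ∀ k j i, μ.map (X k j i) = μ.map (X 0 0 i))
    (hXint : ∀ i a, Integrable (fun ω => (X 0 0 i ω a : ℝ)) μ)
    (hM : ∀ k z, Measurable (M k z)) (hMz : ∀ k z ω i, -(z i : ℤ) ≤ M k z ω i)
    (hMid : ∀ k z, μ.map (M k z) = μ.map (M 0 z))
    (hMint : ∀ z i, Integrable (fun ω => (M 0 z ω i : ℝ)) μ)
    {w : Fin p → ℝ≥0∞} (hw : ∀ i, ∑ a, w a * ENNReal.ofReal (∫ ω, (X 0 0 i ω a : ℝ) ∂μ) = w i)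
    (k : ℕ) {A : Set Ω} (hA : MeasurableSet[mbpmFiltration hF k] A)
    (hAM : ∀ ω ∈ A, ∀ i, ∫ ω', (M 0 (Z k ω) ω' i : ℝ) ∂μ ≤ 0) :
    ∫⁻ ω in A, weightedCount w (Z (k + 1) ω) ∂μ ≤ ∫⁻ ω in A, weightedCount w (Z k ω) ∂μ := by
  rw [hstep k]
  refine setLIntegral_weightedCount_branchStep_le (sigmaOf_mono (mbpmPast_mono le_rfl k.le_succ))
    (sigmaOf_le hF _) (measurable_mbpmFiltration hF hstep k)
    (fun z => measurable_migration_sigmaOf k.lt_succ_self z) (hX k)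
    (setLIntegral_offspring_eq_mul hF hind hX hXid hXint k)
    (setLIntegral_migrated_eq_mul hF hind hM hMz hMid hMint k) hw hA fun ω hω i => ?_
  rw [← ENNReal.ofReal_natCast]
  exact ENNReal.ofReal_le_ofReal (add_le_of_nonpos_right (hAM ω hω i))

end MBPM

theorem mbpm_no_unlimited_growth_of_eventually_nonpositive_migration_mean_general
    {Ω : Type*} [MeasureSpace Ω] [IsProbabilityMeasure (ℙ : Measure Ω)]
    (p : ℕ)
    -- the process, the offspring variables and the migration variables
    (Z : ℕ → Ω → Fin p → ℕ)
    (X : ℕ → ℕ → Fin p → Ω → Fin p → ℕ)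
    (M : ℕ → (Fin p → ℕ) → Ω → Fin p → ℤ)
    (hZ0meas : Measurable (Z 0)) (hXmeas : ∀ k j i, Measurable (X k j i))
    (hMmeas : ∀ k z, Measurable (M k z))
    -- migration stays above `-z`
    (hMz : ∀ k z ω i, -(z i : ℤ) ≤ M k z ω i)
    -- identical distributions
    (hXid : ∀ k j i, Measure.map (X k j i) ℙ = Measure.map (X 0 0 i) ℙ)
    (hMid : ∀ k z, Measure.map (M k z) ℙ = Measure.map (M 0 z) ℙ)
    -- integrability
    (hXint : ∀ i a, Integrable (fun ω => (X 0 0 i ω a : ℝ)))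
    (hMint : ∀ z i, Integrable (fun ω => (M 0 z ω i : ℝ)))
    -- mutual independence of `Z 0`, the `X k j i` and the `M k z`
    (hindep : iIndepFun (β := fun _ : Unit ⊕ (ℕ × ℕ × Fin p) ⊕ (ℕ × (Fin p → ℕ)) => Fin p → ℤ)
      (Sum.elim (fun _ ω a => ((Z 0 ω a : ℤ)))
        (Sum.elim (fun kji ω a => ((X kji.1 kji.2.1 kji.2.2 ω a : ℤ)))
          (fun kz => M kz.1 kz.2))) ℙ)
    -- the branching recursion defining the MBPM
    (hrec : ∀ k ω a, Z (k + 1) ω a =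
      ∑ i, ∑ j ∈ Finset.range (((Z k ω i : ℤ) + M k (Z k ω) ω i).toNat), X k j i ω a)
    -- offspring mean matrix (columns `m i`) and mean migration `h`
    (m : Fin p → Fin p → ℝ) (hm : ∀ i a, m i a = ∫ ω, (X 0 0 i ω a : ℝ))
    (h : (Fin p → ℕ) → Fin p → ℝ) (hh : ∀ z i, h z i = ∫ ω, (M 0 z ω i : ℝ))
    -- Hypothesis A: `m` is primitive with Perron–Frobenius eigenvalue 1; `u` is the
    -- strictly positive normalized left eigenvector
    (u : Fin p → ℝ) (hu : ∀ i, 0 < u i)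
    (hum : ∀ i, ∑ a, u a * m i a = u i)
    -- condition (a): for each `i`, `h i z ≤ 0` for all `z` with `‖z‖` large enough
    (hneg : ∀ i, ∃ N : ℝ, ∀ z : Fin p → ℕ, N ≤ ‖(fun a => (z a : ℝ))‖ → h z i ≤ 0) :
    ℙ {ω | Tendsto (fun n => ‖(fun a => (Z n ω a : ℝ))‖) atTop atTop} = 0 := by
  have hF := measurable_mbpmFamily hZ0meas hXmeas hMmeas
  have hstep : ∀ k, Z (k + 1) = branchStep (Z k) (M k) (X k) :=
    fun k => funext fun ω => funext (hrec k ω)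
  have hZ := measurable_mbpmFiltration hF hstep
  have hw : ∀ i, ∑ a, ENNReal.ofReal (u a) * ENNReal.ofReal (∫ ω, (X 0 0 i ω a : ℝ)) =
      ENNReal.ofReal (u i) := by
    intro i
    have hm0 : ∀ a, 0 ≤ u a * m i a := fun a =>
      mul_nonneg (hu a).le (hm i a ▸ integral_nonneg fun ω => Nat.cast_nonneg _)
    simp only [← hm, ← ENNReal.ofReal_mul (hu _).le]
    rw [← ENNReal.ofReal_sum_of_nonneg fun a _ => hm0 a, hum i]
  have hnull := measure_eventually_mem_tendsto_top_eq_zero (ℱ := mbpmFiltration hF)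
    (S := fun k => Z k ⁻¹' {z | ∀ i, h z i ≤ 0})
    (fun k => (measurable_of_countable (weightedCount fun i => ENNReal.ofReal (u i))).comp (hZ k))
    (fun k ω => weightedCount_ne_top (fun i => ENNReal.ofReal_ne_top) (Z k ω))
    (fun k => hZ k MeasurableSet.of_discrete)
    fun k A hA hAS => setLIntegral_weightedCount_succ_le hF hindep hstep hXmeas hXid hXint
      hMmeas hMz hMid hMint hw k hA fun ω hω i => hh (Z k ω) i ▸ hAS hω i
  refine measure_mono_null (fun ω (hω : Tendsto _ _ _) => ?_) hnull
  refine ⟨eventually_all.2 fun i => ?_, tendsto_weightedCount_of_tendsto_norm hu hω⟩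
  obtain ⟨N, hN⟩ := hneg i
  exact (hω.eventually_ge_atTop N).mono fun n hn => hN _ hn

/-- Theorem 1(a): a critical MBPM (Hypotheses A and B) in which, for each type `i`, the mean
migration `h i` is nonpositive for all sufficiently large populations, has no unlimited
growth: `P(‖Z_n‖ → ∞) = 0`. -/
theorem mbpm_no_unlimited_growth_of_eventually_nonpositive_migration_mean
    {Ω : Type*} [MeasureSpace Ω] [IsProbabilityMeasure (ℙ : Measure Ω)]
    (p : ℕ) (hp : 0 < p)
    -- the process, the offspring variables and the migration variables
    (Z : ℕ → Ω → Fin p → ℕ)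
    (X : ℕ → ℕ → Fin p → Ω → Fin p → ℕ)
    (M : ℕ → (Fin p → ℕ) → Ω → Fin p → ℤ)
    (hZ0meas : Measurable (Z 0)) (hXmeas : ∀ k j i, Measurable (X k j i))
    (hMmeas : ∀ k z, Measurable (M k z))
    -- migration stays above `-z`
    (hMz : ∀ k z ω i, -(z i : ℤ) ≤ M k z ω i)
    -- identical distributions
    (hXid : ∀ k j i, Measure.map (X k j i) ℙ = Measure.map (X 0 0 i) ℙ)
    (hMid : ∀ k z, Measure.map (M k z) ℙ = Measure.map (M 0 z) ℙ)
    -- integrability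
    (hXint : ∀ i a, Integrable (fun ω => (X 0 0 i ω a : ℝ)))
    (hMint : ∀ z i, Integrable (fun ω => (M 0 z ω i : ℝ)))
    -- mutual independence of `Z 0`, the `X k j i` and the `M k z`
    (hindep : iIndepFun (β := fun _ : Unit ⊕ (ℕ × ℕ × Fin p) ⊕ (ℕ × (Fin p → ℕ)) => Fin p → ℤ)
      (Sum.elim (fun _ ω a => ((Z 0 ω a : ℤ)))
        (Sum.elim (fun kji ω a => ((X kji.1 kji.2.1 kji.2.2 ω a : ℤ)))
          (fun kz => M kz.1 kz.2))) ℙ)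
    -- the branching recursion defining the MBPM
    (hrec : ∀ k ω a, Z (k + 1) ω a =
      ∑ i, ∑ j ∈ Finset.range (((Z k ω i : ℤ) + M k (Z k ω) ω i).toNat), X k j i ω a)
    -- offspring mean matrix (columns `m i`) and mean migration `h`
    (m : Fin p → Fin p → ℝ) (hm : ∀ i a, m i a = ∫ ω, (X 0 0 i ω a : ℝ))
    (h : (Fin p → ℕ) → Fin p → ℝ) (hh : ∀ z i, h z i = ∫ ω, (M 0 z ω i : ℝ))
    -- Hypothesis A: `m` is primitive with Perron–Frobenius eigenvalue 1; `u` is the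
    -- strictly positive normalized left eigenvector
    (hprimitive : ∃ n : ℕ, 0 < n ∧ ∀ a b, 0 < ((Matrix.of fun a i => m i a) ^ n) a b)
    (u : Fin p → ℝ) (hu : ∀ i, 0 < u i) (husum : ∑ i, u i = 1)
    (hum : ∀ i, ∑ a, u a * m i a = u i)
    -- Hypothesis B: `h i z = o(‖z‖)` as `‖z‖ → ∞`
    (hB : ∀ i, (fun z : Fin p → ℕ => h z i)
      =o[cofinite] (fun z : Fin p → ℕ => ‖(fun a => (z a : ℝ))‖))
    -- condition (a): for each `i`, `h i z ≤ 0` for all `z` with `‖z‖` large enough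
    (hneg : ∀ i, ∃ N : ℝ, ∀ z : Fin p → ℕ, N ≤ ‖(fun a => (z a : ℝ))‖ → h z i ≤ 0) :
    ℙ {ω | Tendsto (fun n => ‖(fun a => (Z n ω a : ℝ))‖) atTop atTop} = 0 :=
  mbpm_no_unlimited_growth_of_eventually_nonpositive_migration_mean_general p Z X M hZ0meas hXmeas
    hMmeas hMz hXid hMid hXint hMint hindep hrec m hm h hh u hu hum hneg
end

section
/- Remark 2(ii): Let c > 0 and α < 1 be real numbers, and let h̄ : [1,∞) → (0,∞) be a continuous strictly positive function with h̄(x)/x^α → c as x → ∞. Define the sequence (a_n) by a_0 = 1 and a_{n+1} = a_n + h̄(a_n). Then a_n → ∞ and a_n ∼ (c(1−α)n)^{1/(1−α)} as n → ∞, i.e. a_n / (c(1−α)n)^{1/(1−α)} → 1. -/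
/-!
The orbit `a` increases, and cannot converge: at a finite limit `l` the increments `h̄ (a n)`
would tend both to `0` and to `h̄ l > 0`. Put `b n = a n ^ (1 - α)` and `ε n = h̄ (a n) / a n → 0`.
Then `b (n + 1) - b n = h̄ (a n) / a n ^ α * ((1 + ε n) ^ (1 - α) - 1) / ε n → c * (1 - α)`,
so `b n / n → c * (1 - α)` by Cesàro, and taking `(1 - α)`-th roots gives the asymptotics.
-/

open Filter Topology Set

section Recurrence

variable {f : ℝ → ℝ} {x₀ : ℝ} {a : ℕ → ℝ}

theorem le_of_recurrence_add_pos (hf : ∀ x, x₀ ≤ x → 0 < f x) (ha0 : x₀ ≤ a 0)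
    (hrec : ∀ n, a (n + 1) = a n + f (a n)) (n : ℕ) : x₀ ≤ a n := by
  induction n with
  | zero => exact ha0
  | succ n ih => linarith [hrec n, hf (a n) ih]

theorem monotone_of_recurrence_add_pos (hf : ∀ x, x₀ ≤ x → 0 < f x) (ha0 : x₀ ≤ a 0)
    (hrec : ∀ n, a (n + 1) = a n + f (a n)) : Monotone a :=
  monotone_nat_of_le_succ fun n =>
    by linarith [hrec n, hf (a n) (le_of_recurrence_add_pos hf ha0 hrec n)]

theorem tendsto_atTop_of_recurrence_add_pos (hcont : ContinuousOn f (Ici x₀))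
    (hf : ∀ x, x₀ ≤ x → 0 < f x) (ha0 : x₀ ≤ a 0) (hrec : ∀ n, a (n + 1) = a n + f (a n)) :
    Tendsto a atTop atTop := by
  have hge := le_of_recurrence_add_pos hf ha0 hrec
  refine (tendsto_atTop_of_monotone (monotone_of_recurrence_add_pos hf ha0 hrec)).resolve_right ?_
  rintro ⟨l, hl⟩
  have hl₀ : x₀ ≤ l := ge_of_tendsto' hl hge
  have hf_to_fl : Tendsto (fun n => f (a n)) atTop (𝓝 (f l)) :=
    (hcont l hl₀).tendsto.comp
      (tendsto_nhdsWithin_of_tendsto_nhds_of_eventually_within a hl (.of_forall hge))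
  have hf_to_zero : Tendsto (fun n => f (a n)) atTop (𝓝 0) := by
    have hdiff := (hl.comp (tendsto_add_atTop_nat 1)).sub hl
    rw [sub_self] at hdiff
    exact hdiff.congr fun n => by simp [hrec]
  exact (hf l hl₀).ne' (tendsto_nhds_unique hf_to_fl hf_to_zero)

end Recurrence

section Increments

variable {h : ℝ → ℝ} {α c : ℝ}

theorem tendsto_div_self_of_tendsto_div_rpow (hα : α < 1)
    (hh : Tendsto (fun x => h x / x ^ α) atTop (𝓝 c)) :
    Tendsto (fun x => h x / x) atTop (𝓝 0) := by
  have hpow : Tendsto (fun x : ℝ => x ^ (α - 1)) atTop (𝓝 0) := by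
    simpa only [neg_sub] using tendsto_rpow_neg_atTop (y := 1 - α) (by linarith)
  refine (mul_zero c ▸ hh.mul hpow).congr' ?_
  filter_upwards [eventually_gt_atTop 0] with x hx
  rw [Real.rpow_sub hx, Real.rpow_one]
  field_simp

/-- Using `dslope` rather than `slope` makes the identity hold at `y = 0` as well. -/
theorem add_rpow_sub_rpow_eq_mul_dslope {x y : ℝ} (α : ℝ) (hx : 0 < x) (hxy : 0 ≤ x + y) :
    (x + y) ^ (1 - α) - x ^ (1 - α) =
      y / x ^ α * dslope (fun ε : ℝ => (1 + ε) ^ (1 - α)) 0 (y / x) := by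
  have hslope := sub_smul_dslope (fun ε : ℝ => (1 + ε) ^ (1 - α)) 0 (y / x)
  simp only [sub_zero, smul_eq_mul, add_zero, Real.one_rpow] at hslope
  have hsplit : x + y = x * (1 + y / x) := by field_simp
  have hbase : 0 ≤ 1 + y / x := by
    rw [hsplit] at hxy; exact nonneg_of_mul_nonneg_right hxy hx
  rw [hsplit, Real.mul_rpow hx.le hbase, Real.rpow_sub hx, Real.rpow_one, ← mul_sub_one, ← hslope]
  field_simp

theorem tendsto_add_rpow_sub_rpow_atTop (hα : α < 1)
    (hh : Tendsto (fun x => h x / x ^ α) atTop (𝓝 c)) :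
    Tendsto (fun x => (x + h x) ^ (1 - α) - x ^ (1 - α)) atTop (𝓝 (c * (1 - α))) := by
  have hratio := tendsto_div_self_of_tendsto_div_rpow hα hh
  have hderiv : HasDerivAt (fun ε : ℝ => (1 + ε) ^ (1 - α)) (1 - α) 0 := by
    simpa using ((hasDerivAt_id (0 : ℝ)).const_add 1).rpow_const (p := 1 - α) (by simp)
  have hdslope : Tendsto (dslope (fun ε : ℝ => (1 + ε) ^ (1 - α)) 0) (𝓝 0) (𝓝 (1 - α)) := by
    have := (continuousAt_dslope_same.mpr hderiv.differentiableAt).tendsto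
    rwa [dslope_same, hderiv.deriv] at this
  refine (hh.mul (hdslope.comp hratio)).congr' ?_
  filter_upwards [eventually_gt_atTop 0, hratio.eventually (lt_mem_nhds neg_one_lt_zero)]
    with x hx hgt
  have hxy : 0 ≤ x + h x := by
    have := (lt_div_iff₀ hx).mp hgt
    linarith
  exact (add_rpow_sub_rpow_eq_mul_dslope α hx hxy).symm

end Increments

theorem tendsto_div_natCast_of_tendsto_sub {b : ℕ → ℝ} {L : ℝ}
    (hb : Tendsto (fun n => b (n + 1) - b n) atTop (𝓝 L)) :
    Tendsto (fun n : ℕ => b n / n) atTop (𝓝 L) := by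
  have hshift : Tendsto (fun n : ℕ => (b n - b 0) / n + b 0 / n) atTop (𝓝 (L + 0)) := by
    refine (hb.cesaro.congr fun n => ?_).add
      (tendsto_const_div_atTop_nhds_zero_nat (b 0))
    rw [Finset.sum_range_sub, inv_mul_eq_div]
  rw [add_zero] at hshift
  exact hshift.congr fun n => by ring

theorem tendsto_div_rpow_inv_of_tendsto_rpow_div {ι : Type*} {l : Filter ι} {u v : ι → ℝ}
    {p L : ℝ} (hp : p ≠ 0) (hL : 0 < L) (hu : ∀ᶠ i in l, 0 ≤ u i) (hv : ∀ᶠ i in l, 0 ≤ v i)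
    (h : Tendsto (fun i => u i ^ p / v i) l (𝓝 L)) :
    Tendsto (fun i => u i / (L * v i) ^ (1 / p)) l (𝓝 1) := by
  have hnorm : Tendsto (fun i => u i ^ p / (L * v i)) l (𝓝 1) := by
    rw [← div_self hL.ne']
    exact (h.div_const L).congr fun i => by rw [div_div, mul_comm]
  have hroot := hnorm.rpow_const (p := 1 / p) (.inl one_ne_zero)
  rw [Real.one_rpow] at hroot
  refine hroot.congr' ?_
  filter_upwards [hu, hv] with i hui hvi
  rw [Real.div_rpow (Real.rpow_nonneg hui _) (mul_nonneg hL.le hvi), one_div,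
    Real.rpow_rpow_inv hui hp]

/-- Remark 2(ii): if `h̄ : [1,∞) → (0,∞)` is continuous and strictly positive with
`h̄(x)/x^α → c` as `x → ∞` for some `c > 0` and `α < 1`, then the sequence defined by
`a 0 = 1`, `a (n+1) = a n + h̄ (a n)` tends to `∞` and satisfies
`a n ∼ (c (1−α) n)^{1/(1−α)}`. -/
theorem sequence_asymptotics
    (c α : ℝ) (hc : 0 < c) (hα : α < 1)
    (hbar : ℝ → ℝ) (hbarcont : ContinuousOn hbar (Set.Ici 1))
    (hbarpos : ∀ x : ℝ, 1 ≤ x → 0 < hbar x)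
    (hbarlim : Tendsto (fun x : ℝ => hbar x / x ^ α) atTop (nhds c))
    (a : ℕ → ℝ) (ha0 : a 0 = 1) (harec : ∀ n, a (n + 1) = a n + hbar (a n)) :
    Tendsto a atTop atTop ∧
    Tendsto (fun n : ℕ => a n / (c * (1 - α) * n) ^ ((1 : ℝ) / (1 - α)))
      atTop (nhds 1) := by
  have htop := tendsto_atTop_of_recurrence_add_pos hbarcont hbarpos ha0.ge harec
  refine ⟨htop, ?_⟩
  have hinc : Tendsto (fun n => a (n + 1) ^ (1 - α) - a n ^ (1 - α)) atTop
      (𝓝 (c * (1 - α))) := by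
    simpa only [harec, Function.comp_def] using (tendsto_add_rpow_sub_rpow_atTop hα hbarlim).comp htop
  have ha_nonneg (n : ℕ) : 0 ≤ a n :=
    zero_le_one.trans (le_of_recurrence_add_pos hbarpos ha0.ge harec n)
  exact tendsto_div_rpow_inv_of_tendsto_rpow_div (sub_pos.mpr hα).ne' (mul_pos hc (sub_pos.mpr hα))
    (.of_forall ha_nonneg) (.of_forall fun n => n.cast_nonneg)
    (tendsto_div_natCast_of_tendsto_sub hinc)
end

section
/- Extinction–explosion duality (equation (2)): Let (Z_k)_{k∈ℤ₊} be an MBPM with the migration structure such that q_i(0) = 0 for every i (so the state 0 is absorbing), and suppose that for every nonzero z ∈ ℤ₊^p, P( ⋂_{i=1}^p ( {M_{0,i}(z) = −z_i} ∪ {M_{0,i}(z) > −z_i and X_{0,j,i} = 0 for all j = 1,…,z_i + M_{0,i}(z)} ) ) > 0. Then P( Z_n → 0 as n → ∞ ) + P( ‖Z_n‖ → ∞ as n → ∞ ) = 1. -/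
/-!
From a nonzero state `z` the population dies out in one step with probability `δ_z > 0`, and
whether it does so at time `n` depends only on the offspring and migration variables of
generation `n`, which are independent of the past and identically distributed in `n`. By Lévy's
conditional Borel–Cantelli lemma, a path that visits `z` infinitely often therefore dies out
almost surely; as `0` is almost surely absorbing (no immigration at `0`), it then tends to `0`.
A path that does not explode returns infinitely often below some bound, and there are only
finitely many states below a bound, so it visits one of them infinitely often.
-/

open MeasureTheory ProbabilityTheory Filter Topology

theorem measurable_comp_countable_index {Ω α β : Type*} [MeasurableSpace Ω] [MeasurableSpace α]
    [MeasurableSpace β] [Countable α] [MeasurableSingletonClass α] {T : Ω → α}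
    (hT : Measurable T) {g : α → Ω → β} (hg : ∀ a, Measurable (g a)) :
    Measurable fun ω => g (T ω) ω :=
  (measurable_from_prod_countable_left (f := fun q : Ω × α => g q.2 q.1) hg).comp
    (measurable_id.prodMk hT)

theorem iIndepFun.map_eq_map_of_identDistrib {Ω κ : Type*} [MeasurableSpace Ω] {μ : Measure Ω}
    [IsProbabilityMeasure μ] {β : κ → Type*} [∀ k, MeasurableSpace (β k)] {F G : ∀ k, Ω → β k}
    (hFm : ∀ k, Measurable (F k)) (hGm : ∀ k, Measurable (G k))
    (hF : iIndepFun F μ) (hG : iIndepFun G μ) (hFG : ∀ k, μ.map (F k) = μ.map (G k)) :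
    μ.map (fun ω k => F k ω) = μ.map (fun ω k => G k ω) := by
  rw [hF.map_fun_eq_infinitePi_map hFm, hG.map_fun_eq_infinitePi_map hGm]
  simp_rw [hFG]

theorem condExp_indicator_inter_indep {Ω : Type*} {m m₀ : MeasurableSpace Ω} {μ : Measure Ω}
    [IsProbabilityMeasure μ] {m' : MeasurableSpace Ω} (hm : m ≤ m₀) (hm' : m' ≤ m₀)
    {A B : Set Ω} (hA : MeasurableSet[m] A) (hB : MeasurableSet[m'] B) (hindep : Indep m' m μ) :
    μ[(A ∩ B).indicator (1 : Ω → ℝ) | m] =ᵐ[μ] A.indicator fun _ => μ.real B := by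
  have hBm : MeasurableSet[m₀] B := hm' _ hB
  rw [← Set.indicator_indicator]
  refine (condExp_indicator ((integrable_const 1).indicator hBm) hA).trans ?_
  have hconst : μ[B.indicator (1 : Ω → ℝ) | m] =ᵐ[μ] fun _ => μ.real B := by
    refine (condExp_indep_eq hm' hm ((stronglyMeasurable_const.indicator hB)) hindep).trans ?_
    exact Eventually.of_forall fun _ => integral_indicator_one hBm
  filter_upwards [hconst] with ω hω
  simp only [Set.indicator, hω]

/-- Lévy's extension of the Borel–Cantelli lemma: given `ℱ (n + 1)`, the conditional probability
of `A (n + 1) ∩ B (n + 1)` is `μ (B 0)` on `A (n + 1)`, and these sum to `∞` along any `ω` lying in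
infinitely many `A n`. -/
theorem ae_mem_limsup_inter_of_indep {Ω : Type*} {m₀ : MeasurableSpace Ω} {μ : Measure Ω}
    [IsProbabilityMeasure μ] {ℱ 𝓗 : ℕ → MeasurableSpace Ω} (hℱ : Monotone ℱ)
    (hℱle : ∀ n, ℱ n ≤ m₀) (h𝓗 : ∀ n, 𝓗 n ≤ ℱ (n + 1)) (hindep : ∀ n, Indep (𝓗 n) (ℱ n) μ)
    {A B : ℕ → Set Ω} (hA : ∀ n, MeasurableSet[ℱ n] (A n)) (hB : ∀ n, MeasurableSet[𝓗 n] (B n))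
    (hBprob : ∀ n, μ (B n) = μ (B 0)) (hBpos : μ (B 0) ≠ 0) :
    ∀ᵐ ω ∂μ, ω ∈ limsup A atTop → ω ∈ limsup (fun n => A n ∩ B n) atTop := by
  let ℱ' : Filtration ℕ m₀ :=
    ⟨fun n => ℱ (n + 1), fun _ _ h => hℱ (Nat.succ_le_succ h), fun n => hℱle (n + 1)⟩
  have hs : ∀ n, MeasurableSet[ℱ' n] (A n ∩ B n) := fun n =>
    (hℱ n.le_succ _ (hA n)).inter (h𝓗 n _ (hB n))
  have hδ : 0 < μ.real (B 0) := ENNReal.toReal_pos hBpos (measure_ne_top _ _)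
  have hcond : ∀ᵐ ω ∂μ, ∀ k, μ[(A (k + 1) ∩ B (k + 1)).indicator (1 : Ω → ℝ) | ℱ' k] ω =
      (A (k + 1)).indicator (fun _ => μ.real (B 0)) ω := by
    refine ae_all_iff.2 fun k => ?_
    have h := condExp_indicator_inter_indep (hℱle (k + 1)) ((h𝓗 (k + 1)).trans (hℱle _))
      (hA (k + 1)) (hB (k + 1)) (hindep (k + 1))
    rw [measureReal_def, hBprob] at h
    exact h
  filter_upwards [ae_mem_limsup_atTop_iff μ hs, hcond] with ω hlevy hω hAω
  rw [hlevy]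
  simp_rw [hω]
  rw [← limsup_nat_add A 1, Set.limsup_eq_tendsto_sum_indicator_atTop hδ] at hAω
  exact hAω

theorem measure_add_measure_eq_one_of_ae_mem_union {Ω : Type*} [MeasurableSpace Ω]
    {μ : Measure Ω} [IsProbabilityMeasure μ] {s t : Set Ω} (hs : MeasurableSet s)
    (ht : MeasurableSet t) (hst : Disjoint s t) (h : ∀ᵐ ω ∂μ, ω ∈ s ∪ t) : μ s + μ t = 1 := by
  rw [← measure_union hst ht, ← prob_compl_eq_zero_iff (hs.union ht)]
  exact h

section NatVectorSequences

variable {p : ℕ}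

theorem finite_setOf_norm_natCast_lt (b : ℝ) :
    {v : Fin p → ℕ | ‖fun a => (v a : ℝ)‖ < b}.Finite := by
  refine (Set.finite_Iic fun _ => ⌈b⌉₊).subset fun v hv a => ?_
  have hva : (v a : ℝ) ≤ ‖fun a => (v a : ℝ)‖ := by
    simpa using norm_le_pi_norm (fun a => (v a : ℝ)) a
  exact Nat.cast_le.1 ((hva.trans hv.le).trans (Nat.le_ceil b))

theorem exists_frequently_eq_of_not_tendsto_norm {u : ℕ → Fin p → ℕ}
    (h : ¬ Tendsto (fun n => ‖fun a => (u n a : ℝ)‖) atTop atTop) :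
    ∃ z, ∃ᶠ n in atTop, u n = z := by
  obtain ⟨b, hb⟩ : ∃ b : ℝ, ∃ᶠ n in atTop, ‖fun a => (u n a : ℝ)‖ < b := by
    simpa [tendsto_atTop, Filter.not_eventually, frequently_atTop] using h
  obtain ⟨z, -, hz⟩ := ((finite_setOf_norm_natCast_lt b).frequently_exists
    (p := fun z n => u n = z)).1 (hb.mono fun n hn => ⟨u n, hn, rfl⟩)
  exact ⟨z, hz⟩

theorem not_tendsto_norm_atTop_of_tendsto_zero {u : ℕ → Fin p → ℕ}
    (h : Tendsto u atTop (𝓝 0)) : ¬ Tendsto (fun n => ‖fun a => (u n a : ℝ)‖) atTop atTop :=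
  not_tendsto_atTop_of_tendsto_nhds
    (((continuous_of_discreteTopology
      (f := fun v : Fin p → ℕ => ‖fun a => (v a : ℝ)‖)).tendsto 0).comp h)

theorem tendsto_zero_or_tendsto_norm_atTop {u : ℕ → Fin p → ℕ}
    (habs : ∀ n, u n = 0 → u (n + 1) = 0) (hhit : ∀ z, (∃ᶠ n in atTop, u n = z) → ∃ n, u n = 0) :
    Tendsto u atTop (𝓝 0) ∨ Tendsto (fun n => ‖fun a => (u n a : ℝ)‖) atTop atTop := by
  refine or_iff_not_imp_right.2 fun h => ?_
  obtain ⟨n, hn⟩ := hhit _ (exists_frequently_eq_of_not_tendsto_norm h).choose_spec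
  rw [nhds_discrete, tendsto_pure, eventually_atTop]
  exact ⟨n, fun m hm => Nat.le_induction hn (fun k _ => habs k) m hm⟩

end NatVectorSequences

namespace MBPM

variable {Ω : Type*} {p : ℕ}

/-- Starting from state `z`, migration `m` and offspring vectors `x j i` leave no individual. -/
def DiesOut (z : Fin p → ℕ) (m : Fin p → ℤ) (x : ℕ → Fin p → Fin p → ℕ) : Prop :=
  ∀ i, m i = -(z i : ℤ) ∨ (-(z i : ℤ) < m i ∧ ∀ j < ((z i : ℤ) + m i).toNat, x j i = 0)

theorem measurableSet_diesOut [MeasurableSpace Ω] (z : Fin p → ℕ) {m : Ω → Fin p → ℤ}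
    {x : ℕ → Fin p → Ω → Fin p → ℕ} (hm : Measurable m) (hx : ∀ j i, Measurable (x j i)) :
    MeasurableSet {ω | DiesOut z (m ω) fun j i => x j i ω} := by
  refine measurableSet_setOfPred.2
    (measurable_comp_countable_index (g := fun m' ω => DiesOut z m' fun j i => x j i ω) hm ?_)
  intro m'
  refine Measurable.forall fun i => measurable_const.or (measurable_const.and ?_)
  exact Measurable.forall fun j => measurable_const.imp
    (measurableSet_setOfPred.1 ((hx j i) (measurableSet_singleton 0)))

abbrev Index (p : ℕ) := Unit ⊕ (ℕ × ℕ × Fin p) ⊕ (ℕ × (Fin p → ℕ))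

def driver (Z₀ : Ω → Fin p → ℕ) (X : ℕ → ℕ → Fin p → Ω → Fin p → ℕ)
    (M : ℕ → (Fin p → ℕ) → Ω → Fin p → ℤ) : Index p → Ω → Fin p → ℤ :=
  Sum.elim (fun (_ : Unit) ω a => ((Z₀ ω a : ℤ)))
    (Sum.elim (fun (kji : ℕ × ℕ × Fin p) ω a => ((X kji.1 kji.2.1 kji.2.2 ω a : ℤ)))
      (fun (kz : ℕ × (Fin p → ℕ)) => M kz.1 kz.2))

/-- The variables of generation `k` are used to build `Z (k + 1)`. -/
def time : Index p → ℕ :=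
  Sum.elim (fun _ => 0) (Sum.elim (fun kji => kji.1 + 1) (fun kz => kz.1 + 1))

abbrev timeSigma (Z₀ : Ω → Fin p → ℕ) (X : ℕ → ℕ → Fin p → Ω → Fin p → ℕ)
    (M : ℕ → (Fin p → ℕ) → Ω → Fin p → ℤ) (S : Set ℕ) : MeasurableSpace Ω :=
  ⨆ x ∈ time ⁻¹' S, MeasurableSpace.comap (driver Z₀ X M x) inferInstance

section Sigma

variable {Z₀ : Ω → Fin p → ℕ} {X : ℕ → ℕ → Fin p → Ω → Fin p → ℕ}
  {M : ℕ → (Fin p → ℕ) → Ω → Fin p → ℤ}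

theorem timeSigma_mono {S T : Set ℕ} (hST : S ⊆ T) :
    timeSigma Z₀ X M S ≤ timeSigma Z₀ X M T :=
  biSup_mono fun _ hx => hST hx

theorem measurable_driver_timeSigma {S : Set ℕ} {x : Index p} (hx : time x ∈ S) :
    Measurable[timeSigma Z₀ X M S] (driver Z₀ X M x) :=
  measurable_iff_comap_le.2 (le_iSup₂_of_le x hx le_rfl)

theorem measurable_toNat_comp {m : MeasurableSpace Ω} {f : Ω → Fin p → ℤ} (hf : Measurable f) :
    Measurable fun ω a => (f ω a).toNat :=
  (measurable_of_countable fun (v : Fin p → ℤ) a => (v a).toNat).comp hf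

theorem measurable_X_timeSigma {S : Set ℕ} {k : ℕ} (hk : k + 1 ∈ S) (j : ℕ) (i : Fin p) :
    Measurable[timeSigma Z₀ X M S] (X k j i) := by
  simpa [driver] using measurable_toNat_comp (measurable_driver_timeSigma (Z₀ := Z₀) (X := X)
    (M := M) (x := .inr (.inl (k, j, i))) hk)

theorem measurable_M_timeSigma {S : Set ℕ} {k : ℕ} (hk : k + 1 ∈ S) (z : Fin p → ℕ) :
    Measurable[timeSigma Z₀ X M S] (M k z) :=
  measurable_driver_timeSigma (x := .inr (.inr (k, z))) hk

theorem measurable_Z₀_timeSigma {S : Set ℕ} (h0 : 0 ∈ S) :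
    Measurable[timeSigma Z₀ X M S] Z₀ := by
  simpa [driver] using measurable_toNat_comp (measurable_driver_timeSigma (Z₀ := Z₀) (X := X)
    (M := M) (x := .inl ()) h0)

variable [MeasurableSpace Ω]

theorem measurable_driver (hZ₀ : Measurable Z₀) (hX : ∀ k j i, Measurable (X k j i))
    (hM : ∀ k z, Measurable (M k z)) (x : Index p) : Measurable (driver Z₀ X M x) := by
  have hcast : Measurable fun (v : Fin p → ℕ) a => (v a : ℤ) := measurable_of_countable _
  rcases x with ⟨⟩ | ⟨k, j, i⟩ | ⟨k, z⟩
  · exact hcast.comp hZ₀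
  · exact hcast.comp (hX k j i)
  · exact hM k z

theorem timeSigma_le (hF : ∀ x, Measurable (driver Z₀ X M x)) (S : Set ℕ) :
    timeSigma Z₀ X M S ≤ ‹MeasurableSpace Ω› :=
  iSup₂_le fun x _ => (hF x).comap_le

theorem indep_timeSigma {μ : Measure Ω} (hF : ∀ x, Measurable (driver Z₀ X M x))
    (hindep : iIndepFun (driver Z₀ X M) μ) {S T : Set ℕ} (hST : Disjoint S T) :
    Indep (timeSigma Z₀ X M S) (timeSigma Z₀ X M T) μ :=
  indep_iSup_of_disjoint (fun x => (hF x).comap_le) hindep.iIndep (hST.preimage time)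

end Sigma

def extinctionEvent (X : ℕ → ℕ → Fin p → Ω → Fin p → ℕ) (M : ℕ → (Fin p → ℕ) → Ω → Fin p → ℤ)
    (n : ℕ) (z : Fin p → ℕ) : Set Ω :=
  {ω | DiesOut z (M n z ω) fun j i => X n j i ω}

/-- The variables of generation `n` that decide `extinctionEvent X M n z`. -/
def generation (n : ℕ) (z : Fin p → ℕ) : (ℕ × Fin p) ⊕ Unit → Index p :=
  Sum.elim (fun ji => .inr (.inl (n, ji.1, ji.2))) fun _ => .inr (.inr (n, z))

theorem generation_injective (n : ℕ) (z : Fin p → ℕ) :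
    Function.Injective (generation (p := p) n z) := by
  rintro (⟨j, i⟩ | ⟨⟩) (⟨j', i'⟩ | ⟨⟩) h <;> simp_all [generation]

def BranchingRecursion (Z : ℕ → Ω → Fin p → ℕ) (X : ℕ → ℕ → Fin p → Ω → Fin p → ℕ)
    (M : ℕ → (Fin p → ℕ) → Ω → Fin p → ℤ) : Prop :=
  ∀ k ω a, Z (k + 1) ω a =
    ∑ i, ∑ j ∈ Finset.range (((Z k ω i : ℤ) + M k (Z k ω) ω i).toNat), X k j i ω a

section Population

variable {Z : ℕ → Ω → Fin p → ℕ} {X : ℕ → ℕ → Fin p → Ω → Fin p → ℕ}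
  {M : ℕ → (Fin p → ℕ) → Ω → Fin p → ℤ}

theorem measurable_Z_timeSigma [MeasurableSpace Ω] (hrec : BranchingRecursion Z X M) (n : ℕ) :
    Measurable[timeSigma (Z 0) X M (Set.Iic n)] (Z n) := by
  induction n with
  | zero => exact measurable_Z₀_timeSigma (Set.mem_Iic.2 le_rfl)
  | succ n ih =>
    let _ := timeSigma (Z 0) X M (Set.Iic (n + 1))
    have hZ : Measurable (Z n) := ih.mono (timeSigma_mono (Set.Iic_subset_Iic.2 n.le_succ)) le_rfl
    have hX : ∀ j i, Measurable (X n j i) := measurable_X_timeSigma (Set.mem_Iic.2 le_rfl)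
    have hM : ∀ z, Measurable (M n z) := measurable_M_timeSigma (Set.mem_Iic.2 le_rfl)
    let offspring (z : Fin p → ℕ) (m : Fin p → ℤ) (ω : Ω) (a : Fin p) : ℕ :=
      ∑ i, ∑ j ∈ Finset.range (((z i : ℤ) + m i).toNat), X n j i ω a
    have hoffspring : ∀ z m, Measurable (offspring z m) := fun z m =>
      measurable_pi_lambda _ fun a => Finset.measurable_sum _ fun i _ =>
        Finset.measurable_sum _ fun j _ => (measurable_pi_apply a).comp (hX j i)
    have hstep : Z (n + 1) = fun ω => offspring (Z n ω) (M n (Z n ω) ω) ω :=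
      funext fun ω => funext fun a => hrec n ω a
    rw [hstep]
    exact measurable_comp_countable_index hZ fun z =>
      measurable_comp_countable_index (hM z) (hoffspring z)

theorem measurableSet_extinctionEvent_timeSigma [MeasurableSpace Ω] (n : ℕ) (z : Fin p → ℕ) :
    MeasurableSet[timeSigma (Z 0) X M {n + 1}] (extinctionEvent X M n z) := by
  let _ := timeSigma (Z 0) X M {n + 1}
  exact measurableSet_diesOut z (measurable_M_timeSigma (Set.mem_singleton _) z)
    (measurable_X_timeSigma (Set.mem_singleton _))

theorem Z_succ_eq_zero_of_diesOut (hrec : BranchingRecursion Z X M)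
    {n : ℕ} {ω : Ω} (h : DiesOut (Z n ω) (M n (Z n ω) ω) fun j i => X n j i ω) :
    Z (n + 1) ω = 0 := by
  funext a
  rw [hrec, Pi.zero_apply]
  refine Finset.sum_eq_zero fun i _ => Finset.sum_eq_zero fun j hj => ?_
  rcases h i with hdead | ⟨-, hnone⟩
  · simp [hdead] at hj
  · simp [hnone j (Finset.mem_range.1 hj)]

theorem ae_eq_zero_of_measure_immigration_eq_zero [MeasurableSpace Ω] {μ : Measure Ω}
    {m : Ω → Fin p → ℤ} {K : Ω → Fin p → Fin 3} {I D : Ω → Fin p → ℕ}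
    (hrep : ∀ ω i, m ω i = if K ω i = 1 then (I ω i : ℤ) else if K ω i = 2 then -(D ω i : ℤ) else 0)
    (hD : ∀ ω i, D ω i = 0) (hK : ∀ i, μ {ω | K ω i = 1} = 0) : ∀ᵐ ω ∂μ, m ω = 0 := by
  have hK' : ∀ᵐ ω ∂μ, ∀ i, K ω i ≠ 1 :=
    ae_all_iff.2 fun i => measure_eq_zero_iff_ae_notMem.1 (hK i)
  filter_upwards [hK'] with ω hω
  funext i
  simp [hrep, hω i, hD]

theorem ae_Z_succ_eq_zero_of_eq_zero [MeasurableSpace Ω] {μ : Measure Ω}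
    (hrec : BranchingRecursion Z X M) (hM : ∀ n, ∀ᵐ ω ∂μ, M n 0 ω = 0) :
    ∀ᵐ ω ∂μ, ∀ n, Z n ω = 0 → Z (n + 1) ω = 0 := by
  filter_upwards [ae_all_iff.2 hM] with ω hω n hZ
  exact Z_succ_eq_zero_of_diesOut hrec (by rw [hZ, hω n]; exact fun i => Or.inl (by simp))

variable [MeasurableSpace Ω] {μ : Measure Ω} [IsProbabilityMeasure μ]

theorem map_driver_generation_eq (hZ₀ : Measurable (Z 0)) (hXm : ∀ k j i, Measurable (X k j i))
    (hMm : ∀ k z, Measurable (M k z)) (hindep : iIndepFun (driver (Z 0) X M) μ)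
    (hXid : ∀ k j i, μ.map (X k j i) = μ.map (X 0 0 i))
    (hMid : ∀ k z, μ.map (M k z) = μ.map (M 0 z)) (n : ℕ) (z : Fin p → ℕ) :
    μ.map (fun ω k => driver (Z 0) X M (generation n z k) ω) =
      μ.map (fun ω k => driver (Z 0) X M (generation 0 z k) ω) := by
  have hF := measurable_driver hZ₀ hXm hMm
  refine iIndepFun.map_eq_map_of_identDistrib (fun _ => hF _) (fun _ => hF _)
    (hindep.precomp (generation_injective n z)) (hindep.precomp (generation_injective 0 z)) ?_
  have hcast : Measurable fun (v : Fin p → ℕ) (a : Fin p) => (v a : ℤ) := measurable_of_countable _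
  rintro (⟨j, i⟩ | ⟨⟩)
  · change μ.map ((fun (v : Fin p → ℕ) a => (v a : ℤ)) ∘ X n j i) =
      μ.map ((fun (v : Fin p → ℕ) a => (v a : ℤ)) ∘ X 0 j i)
    rw [← Measure.map_map hcast (hXm n j i), ← Measure.map_map hcast (hXm 0 j i), hXid n j i,
      hXid 0 j i]
  · exact hMid n z

theorem measure_extinctionEvent_eq (hZ₀ : Measurable (Z 0)) (hXm : ∀ k j i, Measurable (X k j i))
    (hMm : ∀ k z, Measurable (M k z)) (hindep : iIndepFun (driver (Z 0) X M) μ)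
    (hXid : ∀ k j i, μ.map (X k j i) = μ.map (X 0 0 i))
    (hMid : ∀ k z, μ.map (M k z) = μ.map (M 0 z)) (n : ℕ) (z : Fin p → ℕ) :
    μ (extinctionEvent X M n z) = μ (extinctionEvent X M 0 z) := by
  have hF := measurable_driver hZ₀ hXm hMm
  let E : Set ((ℕ × Fin p) ⊕ Unit → Fin p → ℤ) :=
    {v | DiesOut z (v (.inr ())) fun j i a => (v (.inl (j, i)) a).toNat}
  have hE : MeasurableSet E := measurableSet_diesOut z (measurable_pi_apply _)
    fun j i => measurable_toNat_comp (measurable_pi_apply _)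
  have hpre : ∀ n, extinctionEvent X M n z =
      (fun ω k => driver (Z 0) X M (generation n z k) ω) ⁻¹' E := fun n => by
    ext ω; simp [E, extinctionEvent, driver, generation]
  have hjoint : ∀ n, Measurable fun ω k => driver (Z 0) X M (generation n z k) ω :=
    fun n => measurable_pi_lambda _ fun k => hF _
  rw [hpre, hpre, ← Measure.map_apply (hjoint n) hE, ← Measure.map_apply (hjoint 0) hE,
    map_driver_generation_eq hZ₀ hXm hMm hindep hXid hMid]

theorem ae_exists_eq_zero_of_frequently_eq (hZ₀ : Measurable (Z 0))
    (hXm : ∀ k j i, Measurable (X k j i)) (hMm : ∀ k z, Measurable (M k z))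
    (hindep : iIndepFun (driver (Z 0) X M) μ)
    (hXid : ∀ k j i, μ.map (X k j i) = μ.map (X 0 0 i))
    (hMid : ∀ k z, μ.map (M k z) = μ.map (M 0 z))
    (hrec : BranchingRecursion Z X M) (hpos : ∀ z, z ≠ 0 → μ (extinctionEvent X M 0 z) ≠ 0) :
    ∀ᵐ ω ∂μ, ∀ z, (∃ᶠ n in atTop, Z n ω = z) → ∃ n, Z n ω = 0 := by
  refine ae_all_iff.2 fun z => ?_
  rcases eq_or_ne z 0 with rfl | hz
  · exact Eventually.of_forall fun ω h => h.exists
  have hF := measurable_driver hZ₀ hXm hMm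
  have htrials := ae_mem_limsup_inter_of_indep (μ := μ)
    (fun _ _ h => timeSigma_mono (Set.Iic_subset_Iic.2 h)) (fun n => timeSigma_le hF _)
    (fun n => timeSigma_mono (Set.singleton_subset_iff.2 (Set.mem_Iic.2 le_rfl)))
    (fun n => indep_timeSigma hF hindep (by simp))
    (fun n => measurable_Z_timeSigma hrec n (measurableSet_singleton z))
    (measurableSet_extinctionEvent_timeSigma · z)
    (measure_extinctionEvent_eq hZ₀ hXm hMm hindep hXid hMid · z) (hpos z hz)
  filter_upwards [htrials] with ω hω hfreq
  obtain ⟨n, rfl, hdies⟩ := (mem_limsup_iff_frequently_mem.1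
    (hω (mem_limsup_iff_frequently_mem.2 hfreq))).exists
  exact ⟨n + 1, Z_succ_eq_zero_of_diesOut hrec hdies⟩

end Population

end MBPM

theorem mbpm_extinction_explosion_duality_general
    {Ω : Type*} [MeasureSpace Ω] [IsProbabilityMeasure (ℙ : Measure Ω)]
    (p : ℕ)
    (Z : ℕ → Ω → Fin p → ℕ)
    (X : ℕ → ℕ → Fin p → Ω → Fin p → ℕ)
    (M : ℕ → (Fin p → ℕ) → Ω → Fin p → ℤ)
    (hZ0meas : Measurable (Z 0)) (hXmeas : ∀ k j i, Measurable (X k j i))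
    (hMmeas : ∀ k z, Measurable (M k z))
    (hXid : ∀ k j i, Measure.map (X k j i) ℙ = Measure.map (X 0 0 i) ℙ)
    (hMid : ∀ k z, Measure.map (M k z) ℙ = Measure.map (M 0 z) ℙ)
    -- mutual independence of `Z 0`, the `X k j i` and the `M k z`
    (hindep : iIndepFun
      (Sum.elim (fun (_ : Unit) ω a => ((Z 0 ω a : ℤ)))
        (Sum.elim (fun (kji : ℕ × ℕ × Fin p) ω a => ((X kji.1 kji.2.1 kji.2.2 ω a : ℤ)))
          (fun (kz : ℕ × (Fin p → ℕ)) => M kz.1 kz.2))) ℙ)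
    -- the branching recursion defining the MBPM
    (hrec : ∀ k ω a, Z (k + 1) ω a =
      ∑ i, ∑ j ∈ Finset.range (((Z k ω i : ℤ) + M k (Z k ω) ω i).toNat), X k j i ω a)
    -- the migration structure
    (pbar q r : (Fin p → ℕ) → Fin p → ℝ)
    (I : ℕ → (Fin p → ℕ) → Ω → Fin p → ℕ)
    (D : ℕ → (Fin p → ℕ) → Ω → Fin p → ℕ)
    (K : ℕ → (Fin p → ℕ) → Ω → Fin p → Fin 3)
    (hD0 : ∀ k z ω i, z i = 0 → D k z ω i = 0)
    (hK : ∀ k z i, (ℙ {ω | K k z ω i = 0}).toReal = pbar z i ∧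
      (ℙ {ω | K k z ω i = 1}).toReal = q z i ∧ (ℙ {ω | K k z ω i = 2}).toReal = r z i)
    (hMrep : ∀ k z ω i, M k z ω i =
      if K k z ω i = 1 then (I k z ω i : ℤ)
      else if K k z ω i = 2 then -(D k z ω i : ℤ) else 0)
    -- the state `0` is absorbing: no immigration at `0`
    (hq0 : ∀ i, q 0 i = 0)
    -- from every nonzero state, extinction in one step has positive probability
    (hcond : ∀ z : Fin p → ℕ, z ≠ 0 →
      0 < ℙ {ω | ∀ i, M 0 z ω i = -(z i : ℤ) ∨
        (-(z i : ℤ) < M 0 z ω i ∧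
          ∀ j < ((z i : ℤ) + M 0 z ω i).toNat, X 0 j i ω = 0)}) :
    ℙ {ω | Tendsto (fun n => Z n ω) atTop (nhds 0)} +
      ℙ {ω | Tendsto (fun n => ‖(fun a => (Z n ω a : ℝ))‖) atTop atTop} = 1 := by
  have hF := MBPM.measurable_driver hZ0meas hXmeas hMmeas
  have hZ : ∀ n, Measurable (Z n) := fun n =>
    (MBPM.measurable_Z_timeSigma hrec n).mono (MBPM.timeSigma_le hF _) le_rfl
  have hstay := MBPM.ae_Z_succ_eq_zero_of_eq_zero hrec fun n =>
    MBPM.ae_eq_zero_of_measure_immigration_eq_zero (hMrep n 0) (fun ω i => hD0 n 0 ω i rfl)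
      fun i => (measureReal_eq_zero_iff).1 ((hK n 0 i).2.1.trans (hq0 i))
  have hhit := MBPM.ae_exists_eq_zero_of_frequently_eq hZ0meas hXmeas hMmeas hindep hXid hMid
    hrec fun z hz => (hcond z hz).ne'
  refine measure_add_measure_eq_one_of_ae_mem_union (measurableSet_tendsto (l := atTop) _ hZ)
    (measurableSet_tendsto _ fun n =>
      (measurable_of_countable fun v : Fin p → ℕ => ‖fun a => (v a : ℝ)‖).comp (hZ n))
    (Set.disjoint_left.2 fun _ => not_tendsto_norm_atTop_of_tendsto_zero) ?_
  filter_upwards [hstay, hhit] with ω h0 hz using tendsto_zero_or_tendsto_norm_atTop h0 hz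

/-- The extinction–explosion duality (equation (2)): for an MBPM with the migration structure
in which `q i 0 = 0` (so `0` is absorbing) and from every nonzero state the population can
reach `0` in one step with positive probability,
`P(Z_n → 0) + P(‖Z_n‖ → ∞) = 1`. -/
theorem mbpm_extinction_explosion_duality
    {Ω : Type*} [MeasureSpace Ω] [IsProbabilityMeasure (ℙ : Measure Ω)]
    (p : ℕ) (hp : 0 < p)
    (Z : ℕ → Ω → Fin p → ℕ)
    (X : ℕ → ℕ → Fin p → Ω → Fin p → ℕ)
    (M : ℕ → (Fin p → ℕ) → Ω → Fin p → ℤ)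
    (hZ0meas : Measurable (Z 0)) (hXmeas : ∀ k j i, Measurable (X k j i))
    (hMmeas : ∀ k z, Measurable (M k z))
    (hMz : ∀ k z ω i, -(z i : ℤ) ≤ M k z ω i)
    (hXid : ∀ k j i, Measure.map (X k j i) ℙ = Measure.map (X 0 0 i) ℙ)
    (hMid : ∀ k z, Measure.map (M k z) ℙ = Measure.map (M 0 z) ℙ)
    -- mutual independence of `Z 0`, the `X k j i` and the `M k z`
    (hindep : iIndepFun
      (Sum.elim (fun (_ : Unit) ω a => ((Z 0 ω a : ℤ)))
        (Sum.elim (fun (kji : ℕ × ℕ × Fin p) ω a => ((X kji.1 kji.2.1 kji.2.2 ω a : ℤ)))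
          (fun (kz : ℕ × (Fin p → ℕ)) => M kz.1 kz.2))) ℙ)
    -- the branching recursion defining the MBPM
    (hrec : ∀ k ω a, Z (k + 1) ω a =
      ∑ i, ∑ j ∈ Finset.range (((Z k ω i : ℤ) + M k (Z k ω) ω i).toNat), X k j i ω a)
    -- the migration structure
    (pbar q r : (Fin p → ℕ) → Fin p → ℝ)
    (hprob : ∀ z i, 0 ≤ pbar z i ∧ 0 ≤ q z i ∧ 0 ≤ r z i ∧ pbar z i + q z i + r z i = 1)
    (hr0 : ∀ z i, z i = 0 → r z i = 0)
    (I : ℕ → (Fin p → ℕ) → Ω → Fin p → ℕ)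
    (D : ℕ → (Fin p → ℕ) → Ω → Fin p → ℕ)
    (K : ℕ → (Fin p → ℕ) → Ω → Fin p → Fin 3)
    (hI : ∀ k z ω i, 1 ≤ I k z ω i)
    (hD0 : ∀ k z ω i, z i = 0 → D k z ω i = 0)
    (hD : ∀ k z ω i, 0 < z i → 1 ≤ D k z ω i ∧ D k z ω i ≤ z i)
    (hK : ∀ k z i, (ℙ {ω | K k z ω i = 0}).toReal = pbar z i ∧
      (ℙ {ω | K k z ω i = 1}).toReal = q z i ∧ (ℙ {ω | K k z ω i = 2}).toReal = r z i)
    (hMrep : ∀ k z ω i, M k z ω i =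
      if K k z ω i = 1 then (I k z ω i : ℤ)
      else if K k z ω i = 2 then -(D k z ω i : ℤ) else 0)
    -- the state `0` is absorbing: no immigration at `0`
    (hq0 : ∀ i, q 0 i = 0)
    -- from every nonzero state, extinction in one step has positive probability
    (hcond : ∀ z : Fin p → ℕ, z ≠ 0 →
      0 < ℙ {ω | ∀ i, M 0 z ω i = -(z i : ℤ) ∨
        (-(z i : ℤ) < M 0 z ω i ∧
          ∀ j < ((z i : ℤ) + M 0 z ω i).toNat, X 0 j i ω = 0)}) :
    ℙ {ω | Tendsto (fun n => Z n ω) atTop (nhds 0)} +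
      ℙ {ω | Tendsto (fun n => ‖(fun a => (Z n ω a : ℝ))‖) atTop atTop} = 1 :=
  mbpm_extinction_explosion_duality_general p Z X M hZ0meas hXmeas hMmeas hXid hMid hindep hrec pbar
    q r I D K hD0 hK hMrep hq0 hcond
end
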